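/- arXiv:1105.0169 — 8 statements merged into one kernel-verified Lean document; each statement's English description precedes it below -/
import Mathlib

section
/- Any finite set of points in the plane (with pairwise distinct x-coordinates and pairwise distinct y-coordinates) can be colored with 3 colors such that every bottomless rectangle containing at least 2 of the points contains two points of different colors. -/
def bottomless (a b c : ℝ) : Set (ℝ × ℝ) := {p | a < p.1 ∧ p.1 < b ∧ p.2 < c}

def vis (P : Finset (ℝ × ℝ)) (p q : ℝ × ℝ) : Prop :=
  p ≠ q ∧ ∀ r ∈ P, min p.1 q.1 < r.1 → r.1 < max p.1 q.1 → max p.2 q.2 ≤ r.2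

lemma vis_comm {P : Finset (ℝ × ℝ)} {p q : ℝ × ℝ} (h : vis P p q) : vis P q p := by
  obtain ⟨h1, h2⟩ := h
  refine ⟨h1.symm, ?_⟩
  intro r hr ha hb
  rw [min_comm] at ha; rw [max_comm] at hb
  have := h2 r hr ha hb
  rwa [max_comm]

lemma vis_mono {P Q : Finset (ℝ × ℝ)} (h : P ⊆ Q) {p q : ℝ × ℝ} (hv : vis Q p q) :
    vis P p q :=
  ⟨hv.1, fun r hr => hv.2 r (h hr)⟩

lemma exists_good : ∀ (P : Finset (ℝ × ℝ)),
    (∀ p ∈ P, ∀ q ∈ P, p.1 = q.1 → p = q) →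
    (∀ p ∈ P, ∀ q ∈ P, p.2 = q.2 → p = q) →
    ∃ f : ℝ × ℝ → Fin 3, ∀ p ∈ P, ∀ q ∈ P, vis P p q → f p ≠ f q := by
  intro P
  induction P using Finset.strongInduction with
  | _ P ih =>
    intro hx hy
    classical
    rcases P.eq_empty_or_nonempty with rfl | hne
    · exact ⟨fun _ => 0, by simp⟩
    obtain ⟨m, hmP, hm⟩ := P.exists_max_image Prod.snd hne
    set P' := P.erase m with hP'def
    have hsubset : P' ⊆ P := Finset.erase_subset _ _
    have hssub : P' ⊂ P := Finset.erase_ssubset hmP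
    obtain ⟨f, hf⟩ := ih P' hssub
      (fun p hp q hq h => hx p (hsubset hp) q (hsubset hq) h)
      (fun p hp q hq h => hy p (hsubset hp) q (hsubset hq) h)
    -- no point of P' strictly x-between m and a visible neighbor of m
    have side : ∀ u v : ℝ × ℝ, v ∈ P' → vis P m u →
        min m.1 u.1 < v.1 → v.1 < max m.1 u.1 → False := by
      intro u v hv hvis h1 h2
      have hvP : v ∈ P := hsubset hv
      have h3 : max m.2 u.2 ≤ v.2 := hvis.2 v hvP h1 h2
      have h4 : v.2 ≤ m.2 := hm v hvP
      have h5 : v.2 = m.2 := le_antisymm h4 (le_trans (le_max_left _ _) h3)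
      exact (Finset.mem_erase.mp hv).1 (hy v hvP m hmP h5)
    -- two distinct visible neighbors of m must lie on opposite sides
    have pair : ∀ u v : ℝ × ℝ, u ∈ P' → v ∈ P' → vis P m u → vis P m v → u ≠ v →
        ¬(u.1 < m.1 ↔ v.1 < m.1) := by
      intro u v hu hv visu visv hne' hiff
      have hxm : ∀ w ∈ P', w.1 ≠ m.1 := fun w hw h =>
        (Finset.mem_erase.mp hw).1 (hx w (hsubset hw) m hmP h)
      have huv : u.1 ≠ v.1 := fun h => hne' (hx u (hsubset hu) v (hsubset hv) h)
      rcases lt_or_gt_of_ne huv with h | h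
      · rcases lt_or_gt_of_ne (hxm v hv) with hv1 | hv1
        · -- u.1 < v.1 < m.1 : v between u and m
          exact side u v hv visu (lt_of_le_of_lt (min_le_right _ _) h)
            (lt_of_lt_of_le hv1 (le_max_left _ _))
        · -- m.1 < v.1, so m.1 < u.1 by hiff, u between m and v
          have hmu : m.1 < u.1 := by
            rcases lt_or_gt_of_ne (hxm u hu) with h' | h'
            · exact absurd (hiff.mp h') (not_lt.mpr hv1.le)
            · exact h'
          exact side v u hu visv (lt_of_le_of_lt (min_le_left _ _) hmu)
            (lt_of_lt_of_le h (le_max_right _ _))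
      · rcases lt_or_gt_of_ne (hxm u hu) with hu1 | hu1
        · -- v.1 < u.1 < m.1 : u between v and m
          exact side v u hu visv (lt_of_le_of_lt (min_le_right _ _) h)
            (lt_of_lt_of_le hu1 (le_max_left _ _))
        · -- m.1 < u.1, so m.1 < v.1 by hiff
          have hmv : m.1 < v.1 := by
            rcases lt_or_gt_of_ne (hxm v hv) with h' | h'
            · exact absurd (hiff.mpr h') (not_lt.mpr hu1.le)
            · exact h'
          exact side u v hv visu (lt_of_le_of_lt (min_le_left _ _) hmv)
            (lt_of_lt_of_le h (le_max_right _ _))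
    set N := P'.filter (fun p => vis P m p) with hNdef
    have hN2 : N.card ≤ 2 := by
      by_contra hcon
      push_neg at hcon
      obtain ⟨a, b, c, ha, hb, hc, hab, hac, hbc⟩ := Finset.two_lt_card_iff.mp hcon
      obtain ⟨ha', visa⟩ := Finset.mem_filter.mp ha
      obtain ⟨hb', visb⟩ := Finset.mem_filter.mp hb
      obtain ⟨hc', visc⟩ := Finset.mem_filter.mp hc
      have p1 := pair a b ha' hb' visa visb hab
      have p2 := pair a c ha' hc' visa visc hac
      have p3 := pair b c hb' hc' visb visc hbc
      tauto
    obtain ⟨c0, hc0⟩ : ∃ c : Fin 3, c ∉ N.image f := by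
      by_contra hcon
      push_neg at hcon
      have hsub : (Finset.univ : Finset (Fin 3)) ⊆ N.image f := fun c _ => hcon c
      have h1 := Finset.card_le_card hsub
      have h2 := Finset.card_image_le (f := f) (s := N)
      simp only [Finset.card_univ, Fintype.card_fin] at h1
      omega
    refine ⟨Function.update f m c0, ?_⟩
    intro p hp q hq hvis
    by_cases hpm : p = m <;> by_cases hqm : q = m
    · exact absurd (hpm.trans hqm.symm) hvis.1
    · subst hpm
      have hqP' : q ∈ P' := Finset.mem_erase.mpr ⟨hqm, hq⟩
      have hqN : q ∈ N := Finset.mem_filter.mpr ⟨hqP', hvis⟩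
      rw [Function.update_self, Function.update_of_ne hqm]
      exact fun h => hc0 (h ▸ Finset.mem_image_of_mem f hqN)
    · subst hqm
      have hpP' : p ∈ P' := Finset.mem_erase.mpr ⟨hpm, hp⟩
      have hpN : p ∈ N := Finset.mem_filter.mpr ⟨hpP', vis_comm hvis⟩
      rw [Function.update_self, Function.update_of_ne hpm]
      exact fun h => hc0 (h ▸ Finset.mem_image_of_mem f hpN)
    · have hpP' : p ∈ P' := Finset.mem_erase.mpr ⟨hpm, hp⟩
      have hqP' : q ∈ P' := Finset.mem_erase.mpr ⟨hqm, hq⟩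
      rw [Function.update_of_ne hpm, Function.update_of_ne hqm]
      exact hf p hpP' q hqP' (vis_mono hsubset hvis)

theorem stmt0 (P : Finset (ℝ × ℝ))
    (hx : ∀ p ∈ P, ∀ q ∈ P, p.1 = q.1 → p = q)
    (hy : ∀ p ∈ P, ∀ q ∈ P, p.2 = q.2 → p = q) :
    ∃ f : ℝ × ℝ → Fin 3, ∀ a b c : ℝ, a < b →
      2 ≤ (bottomless a b c ∩ ↑P).ncard →
      ∃ p ∈ P, ∃ q ∈ P, p ∈ bottomless a b c ∧ q ∈ bottomless a b c ∧ f p ≠ f q := by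
  classical
  obtain ⟨f, hf⟩ := exists_good P hx hy
  refine ⟨f, ?_⟩
  intro a b c hab hcard
  set S := P.filter (fun p => p ∈ bottomless a b c) with hSdef
  have hcoe : bottomless a b c ∩ ↑P = ↑S := by
    ext r
    simp [hSdef, and_comm]
  rw [hcoe, Set.ncard_coe_finset] at hcard
  have hSne : S.Nonempty := Finset.card_pos.mp (by omega)
  obtain ⟨p, hpS, hpmin⟩ := S.exists_min_image Prod.fst hSne
  have hS'ne : (S.erase p).Nonempty := by
    rw [← Finset.card_pos, Finset.card_erase_of_mem hpS]; omega
  obtain ⟨q, hqS', hqmin⟩ := (S.erase p).exists_min_image Prod.fst hS'ne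
  have hqS : q ∈ S := Finset.mem_of_mem_erase hqS'
  obtain ⟨hpP, hpB⟩ := Finset.mem_filter.mp hpS
  obtain ⟨hqP, hqB⟩ := Finset.mem_filter.mp hqS
  have hpq : p ≠ q := fun h => (Finset.mem_erase.mp hqS').1 h.symm
  have hx_pq : p.1 < q.1 := by
    rcases lt_or_eq_of_le (hpmin q hqS) with h | h
    · exact h
    · exact absurd (hx p hpP q hqP h) hpq
  have hmin : min p.1 q.1 = p.1 := min_eq_left hx_pq.le
  have hmax : max p.1 q.1 = q.1 := max_eq_right hx_pq.le
  have hvis : vis P p q := by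
    refine ⟨hpq, ?_⟩
    intro r hr h1 h2
    rw [hmin] at h1; rw [hmax] at h2
    by_contra h3
    push_neg at h3
    have hrB : r ∈ bottomless a b c :=
      ⟨lt_trans hpB.1 h1, lt_trans h2 hqB.2.1,
        lt_trans h3 (max_lt hpB.2.2 hqB.2.2)⟩
    have hrS : r ∈ S := Finset.mem_filter.mpr ⟨hr, hrB⟩
    have hrp : r ≠ p := fun h => by rw [h] at h1; exact lt_irrefl _ h1
    have := hqmin r (Finset.mem_erase.mpr ⟨hrp, hrS⟩)
    linarith
  exact ⟨p, hpP, q, hqP, hpB, hqB, hf p hpP q hqP hvis⟩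
end

section
/- Any finite set of points in the plane with pairwise distinct x-coordinates and pairwise distinct y-coordinates can be colored with 2 colors such that every bottomless rectangle containing at least 4 of the points contains two points of different colors. -/
open Finset

section LinearOrder

variable {α : Type*} [LinearOrder α]

def IsSeparatedBy (U C : Finset α) : Prop :=
  ∀ u ∈ U, ∀ v ∈ U, u < v → ∃ c ∈ C, c ∈ Set.Ioo u v

theorem IsSeparatedBy.mono {U U' C C' : Finset α} (h : IsSeparatedBy U C) (hU : U' ⊆ U)
    (hC : C ⊆ C') : IsSeparatedBy U' C' :=
  fun u hu v hv huv => (h u (hU hu) v (hU hv) huv).imp fun _ ⟨hc, hcI⟩ => ⟨hC hc, hcI⟩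

theorem IsSeparatedBy.card_le_card_filter_lt_add_one {U C : Finset α} (h : IsSeparatedBy U C)
    {a : α} (ha : ∀ u ∈ U, u ≤ a) : #U ≤ #{c ∈ C | c < a} + 1 := by
  induction U using Finset.induction_on_max generalizing a with
  | empty => simp
  | insert m s hlt ih =>
    have hm : m ∉ s := fun hm => (hlt m hm).false
    rw [card_insert_of_notMem hm]
    rcases s.eq_empty_or_nonempty with rfl | hs
    · simp
    obtain ⟨c, hc, hmc, hcm⟩ := h _ (mem_insert_of_mem (s.max'_mem hs)) m (mem_insert_self m s)
      (hlt _ (s.max'_mem hs))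
    have hs_card : #s ≤ #{c' ∈ C | c' < c} + 1 :=
      ih (h.mono (subset_insert m s) subset_rfl) fun u hu => (s.le_max' u hu).trans hmc.le
    have hca : c < a := hcm.trans_le (ha m (mem_insert_self m s))
    have hinsert : insert c {c' ∈ C | c' < c} ⊆ {c' ∈ C | c' < a} := by
      intro x hx
      simp only [mem_insert, mem_filter] at hx ⊢
      rcases hx with rfl | ⟨hxC, hxc⟩
      exacts [⟨hc, hca⟩, ⟨hxC, hxc.trans hca⟩]
    have := card_le_card hinsert
    rw [card_insert_of_notMem (by simp)] at this
    omega

theorem IsSeparatedBy.card_le_card_add_one {U C : Finset α} (h : IsSeparatedBy U C) :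
    #U ≤ #C + 1 := by
  rcases U.eq_empty_or_nonempty with rfl | hU
  · simp
  exact (h.card_le_card_filter_lt_add_one (a := U.max' hU) fun u hu => U.le_max' u hu).trans
    (Nat.add_le_add_right (card_filter_le _ _) 1)

def parityBelow (C : Finset α) (x : α) : ZMod 2 := #{c ∈ C | c < x}

theorem parityBelow_insert_insert {C : Finset α} {u v x : α} (hu : u ∉ C) (hv : v ∉ C)
    (huv : u ≠ v) (hx : u < x ↔ v < x) :
    parityBelow (insert u (insert v C)) x = parityBelow C x := by
  unfold parityBelow
  rw [filter_insert, filter_insert]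
  by_cases hvx : v < x
  · rw [if_pos (hx.2 hvx), if_pos hvx, card_insert_of_notMem (by simp [huv, hu]),
      card_insert_of_notMem (by simp [hv])]
    push_cast
    rw [add_assoc, add_eq_left]
    rfl
  · rw [if_neg (hx.not.2 hvx), if_neg hvx]

theorem parityBelow_ne_of_forall_notMem_Ioo {C : Finset α} {x y : α} (hx : x ∈ C) (hxy : x < y)
    (hgap : ∀ z ∈ C, z ∉ Set.Ioo x y) : parityBelow C x ≠ parityBelow C y := by
  have hsplit : {c ∈ C | c < y} = insert x {c ∈ C | c < x} := by
    ext z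
    simp only [mem_filter, mem_insert]
    constructor
    · rintro ⟨hz, hzy⟩
      rcases lt_trichotomy z x with h | rfl | h
      exacts [Or.inr ⟨hz, h⟩, Or.inl rfl, absurd ⟨h, hzy⟩ (hgap z hz)]
    · rintro (rfl | ⟨hz, hzx⟩)
      exacts [⟨hx, hxy⟩, ⟨hz, hzx.trans hxy⟩]
  rw [parityBelow, parityBelow, hsplit, card_insert_of_notMem (by simp)]
  push_cast
  simp

theorem exists_consecutive_of_one_lt_card {S : Finset α} (hS : 1 < #S) :
    ∃ x ∈ S, ∃ y ∈ S, x < y ∧ ∀ z ∈ S, z ∉ Set.Ioo x y := by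
  have hne : S.Nonempty := card_pos.1 (by omega)
  have hne' : (S.erase (S.min' hne)).Nonempty := by
    rw [← card_pos, card_erase_of_mem (S.min'_mem hne)]
    omega
  refine ⟨_, S.min'_mem hne, _, mem_of_mem_erase ((S.erase _).min'_mem hne'),
    S.min'_lt_of_mem_erase_min' hne ((S.erase _).min'_mem hne'), fun z hz hzI => ?_⟩
  exact hzI.2.not_ge ((S.erase _).min'_le z (mem_erase.2 ⟨hzI.1.ne', hz⟩))

theorem IsSeparatedBy.exists_parityBelow_ne {X C : Finset α} (h : IsSeparatedBy (X \ C) C)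
    {a b : α} (h4 : 4 ≤ #{x ∈ X | x ∈ Set.Ioo a b}) :
    ∃ x ∈ C, ∃ y ∈ C, x ∈ Set.Ioo a b ∧ y ∈ Set.Ioo a b ∧ parityBelow C x ≠ parityBelow C y := by
  set I := {x ∈ X | x ∈ Set.Ioo a b}
  set CI := {c ∈ C | c ∈ Set.Ioo a b}
  have hsep : IsSeparatedBy (I \ C) CI := by
    intro u hu v hv huv
    have hI : I \ C ⊆ X \ C := sdiff_subset_sdiff (filter_subset _ _) subset_rfl
    obtain ⟨c, hc, hcuv⟩ := h u (hI hu) v (hI hv) huv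
    have hua := (mem_filter.1 (mem_sdiff.1 hu).1).2
    have hvb := (mem_filter.1 (mem_sdiff.1 hv).1).2
    exact ⟨c, mem_filter.2 ⟨hc, hua.1.trans hcuv.1, hcuv.2.trans hvb.2⟩, hcuv⟩
  have hcard : 1 < #CI := by
    have hU := hsep.card_le_card_add_one
    have hI := card_sdiff_add_card_inter I C
    have hIC : #(I ∩ C) ≤ #CI := card_le_card fun z hz => by
      simp only [I, CI, mem_inter, mem_filter] at hz ⊢
      exact ⟨hz.2, hz.1.2⟩
    omega
  obtain ⟨x, hx, y, hy, hxy, hgap⟩ := exists_consecutive_of_one_lt_card hcard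
  rw [mem_filter] at hx hy
  refine ⟨x, hx.1, y, hy.1, hx.2, hy.2, parityBelow_ne_of_forall_notMem_Ioo hx.1 hxy ?_⟩
  exact fun z hz hzI => hgap z (mem_filter.2 ⟨hz, hx.2.1.trans hzI.1, hzI.2.trans hy.2.2⟩) hzI

theorem exists_mem_Ioc_forall_notMem_Ioo {X : Finset α} {t v : α} (hv : v ∈ X) (htv : t < v) :
    ∃ n ∈ X, n ∈ Set.Ioc t v ∧ ∀ z ∈ X, z ∉ Set.Ioo t n := by
  have hne : {x ∈ X | t < x}.Nonempty := ⟨v, mem_filter.2 ⟨hv, htv⟩⟩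
  obtain ⟨hnX, htn⟩ := mem_filter.1 (min'_mem _ hne)
  exact ⟨_, hnX, ⟨htn, min'_le _ _ (mem_filter.2 ⟨hv, htv⟩)⟩,
    fun z hz hzI => hzI.2.not_ge (min'_le _ _ (mem_filter.2 ⟨hz, hzI.1⟩))⟩

theorem exists_mem_Ico_forall_notMem_Ioo {X : Finset α} {t v : α} (hv : v ∈ X) (hvt : v < t) :
    ∃ n ∈ X, n ∈ Set.Ico v t ∧ ∀ z ∈ X, z ∉ Set.Ioo n t := by
  obtain ⟨n, hn, ⟨h1, h2⟩, h⟩ := exists_mem_Ioc_forall_notMem_Ioo (α := αᵒᵈ) hv hvt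
  exact ⟨n, hn, ⟨h2, h1⟩, fun z hz hzI => h z hz ⟨hzI.2, hzI.1⟩⟩

theorem IsSeparatedBy.exists_extension {X C : Finset α} {t : α} (hC : C ⊆ X)
    (h : IsSeparatedBy (X \ C) C) (ht : t ∉ X) :
    ∃ C', C ⊆ C' ∧ C' ⊆ insert t X ∧ IsSeparatedBy (insert t X \ C') C' ∧
      ∀ z ∈ C, parityBelow C' z = parityBelow C z := by
  by_cases hadj : ∃ n ∈ X \ C, ∀ z ∈ X, z ∉ Set.uIoo n t
  · obtain ⟨n, hn, hgap⟩ := hadj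
    rw [mem_sdiff] at hn
    have hnt : n ≠ t := fun h => ht (h ▸ hn.1)
    have hCC' : C ⊆ insert n (insert t C) := (subset_insert _ _).trans (subset_insert _ _)
    refine ⟨insert n (insert t C), hCC', insert_subset (mem_insert_of_mem hn.1)
      (insert_subset_insert t hC), h.mono (fun z => ?_) hCC', fun z hz => ?_⟩
    · simp only [mem_sdiff, mem_insert]
      tauto
    refine parityBelow_insert_insert hn.2 (fun htC => ht (hC htC)) hnt ?_
    have hzn : z ≠ n := fun h => hn.2 (h ▸ hz)
    have hzt : z ≠ t := fun h => ht (h ▸ hC hz)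
    have hz := hgap z (hC hz)
    rcases hnt.lt_or_gt with hlt | hlt
    · rw [Set.uIoo_of_lt hlt, Set.mem_Ioo, not_and_or, not_lt, not_lt] at hz
      constructor <;> intro <;> rcases hz with hz | hz <;> order
    · rw [Set.uIoo_of_gt hlt, Set.mem_Ioo, not_and_or, not_lt, not_lt] at hz
      constructor <;> intro <;> rcases hz with hz | hz <;> order
  · have hmemC : ∀ n ∈ X, (∀ z ∈ X, z ∉ Set.uIoo n t) → n ∈ C := fun n hn hgap => by
      by_contra hnC
      exact hadj ⟨n, mem_sdiff.2 ⟨hn, hnC⟩, hgap⟩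
    refine ⟨C, subset_rfl, hC.trans (subset_insert t X), ?_, fun _ _ => rfl⟩
    intro u hu v hv huv
    simp only [mem_sdiff, mem_insert] at hu hv
    rcases hu with ⟨rfl | hu, huC⟩ <;> rcases hv with ⟨rfl | hv, hvC⟩
    · exact absurd huv (lt_irrefl _)
    · obtain ⟨n, hn, ⟨hun, hnv⟩, hgap⟩ := exists_mem_Ioc_forall_notMem_Ioo hv huv
      have hnC := hmemC n hn (by rwa [Set.uIoo_of_gt hun])
      exact ⟨n, hnC, hun, hnv.lt_of_ne (by rintro rfl; exact hvC hnC)⟩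
    · obtain ⟨n, hn, ⟨hun, hnv⟩, hgap⟩ := exists_mem_Ico_forall_notMem_Ioo hu huv
      have hnC := hmemC n hn (by rwa [Set.uIoo_of_lt hnv])
      exact ⟨n, hnC, hun.lt_of_ne' (by rintro rfl; exact huC hnC), hnv⟩
    · exact h u (mem_sdiff.2 ⟨hu, huC⟩) v (mem_sdiff.2 ⟨hv, hvC⟩) huv

end LinearOrder

def SplitsBottomless (Q : Finset (ℝ × ℝ)) (C : Finset ℝ) : Prop :=
  ∀ a b c : ℝ, 4 ≤ (bottomless a b c ∩ ↑Q).ncard →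
    ∃ p ∈ Q, ∃ p' ∈ Q, p ∈ bottomless a b c ∧ p' ∈ bottomless a b c ∧ p.1 ∈ C ∧ p'.1 ∈ C ∧
      parityBelow C p.1 ≠ parityBelow C p'.1

theorem ncard_bottomless_inter_of_forall_snd_lt {Q : Finset (ℝ × ℝ)}
    (hQ : Set.InjOn Prod.fst (Q : Set (ℝ × ℝ))) {a b c : ℝ} (hc : ∀ p ∈ Q, p.2 < c) :
    (bottomless a b c ∩ ↑Q).ncard = #{x ∈ Q.image Prod.fst | x ∈ Set.Ioo a b} := by
  have hR : bottomless a b c ∩ ↑Q = ↑{p ∈ Q | p.1 ∈ Set.Ioo a b} := by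
    ext p
    simp only [bottomless, Set.mem_inter_iff, Set.mem_ofPred_eq, coe_filter, Set.mem_Ioo]
    exact ⟨fun ⟨⟨ha, hb, _⟩, hp⟩ => ⟨hp, ha, hb⟩, fun ⟨hp, ha, hb⟩ => ⟨⟨ha, hb, hc p hp⟩, hp⟩⟩
  rw [hR, Set.ncard_coe_finset, filter_image,
    card_image_of_injOn (hQ.mono (coe_subset.2 (filter_subset _ _)))]

theorem exists_bichromatic_of_forall_snd_lt {Q : Finset (ℝ × ℝ)} {C : Finset ℝ}
    (hQ : Set.InjOn Prod.fst (Q : Set (ℝ × ℝ))) (hCQ : C ⊆ Q.image Prod.fst)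
    (hsep : IsSeparatedBy (Q.image Prod.fst \ C) C) {a b c : ℝ} (hc : ∀ p ∈ Q, p.2 < c)
    (h4 : 4 ≤ (bottomless a b c ∩ ↑Q).ncard) :
    ∃ p ∈ Q, ∃ p' ∈ Q, p ∈ bottomless a b c ∧ p' ∈ bottomless a b c ∧ p.1 ∈ C ∧ p'.1 ∈ C ∧
      parityBelow C p.1 ≠ parityBelow C p'.1 := by
  rw [ncard_bottomless_inter_of_forall_snd_lt hQ hc] at h4
  obtain ⟨x, hx, x', hx', hxI, hx'I, hne⟩ := hsep.exists_parityBelow_ne h4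
  obtain ⟨p, hp, rfl⟩ := mem_image.1 (hCQ hx)
  obtain ⟨p', hp', rfl⟩ := mem_image.1 (hCQ hx')
  exact ⟨p, hp, p', hp', ⟨hxI.1, hxI.2, hc p hp⟩, ⟨hx'I.1, hx'I.2, hc p' hp'⟩, hx, hx', hne⟩

theorem exists_isSeparatedBy_splitsBottomless (Q : Finset (ℝ × ℝ))
    (hQ : Set.InjOn Prod.fst (Q : Set (ℝ × ℝ))) :
    ∃ C ⊆ Q.image Prod.fst, IsSeparatedBy (Q.image Prod.fst \ C) C ∧ SplitsBottomless Q C := by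
  induction Q using Finset.induction_on_max_value (Prod.snd : ℝ × ℝ → ℝ) with
  | empty => exact ⟨∅, empty_subset _, by simp [IsSeparatedBy], fun a b c h => by simp at h⟩
  | insert q Q hqQ hmax ih =>
    rw [coe_insert] at hQ
    obtain ⟨C, hCQ, hsep, hsplit⟩ := ih (hQ.mono (Set.subset_insert q _))
    have hqX : q.1 ∉ Q.image Prod.fst := fun hq => by
      obtain ⟨p, hp, hpq⟩ := mem_image.1 hq
      exact hqQ (hQ (Set.mem_insert_of_mem q hp) (Set.mem_insert q _) hpq ▸ hp)
    obtain ⟨C', hCC', hC'Q, hsep', hpar⟩ := hsep.exists_extension hCQ hqX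
    rw [image_insert]
    refine ⟨C', hC'Q, hsep', fun a b c h4 => ?_⟩
    by_cases hq : q ∈ bottomless a b c
    · rw [← image_insert] at hC'Q hsep'
      refine exists_bichromatic_of_forall_snd_lt (by rwa [coe_insert]) hC'Q hsep'
        (fun p hp => ?_) h4
      rcases mem_insert.1 hp with rfl | hp
      exacts [hq.2.2, (hmax p hp).trans_lt hq.2.2]
    · rw [coe_insert, Set.inter_insert_of_notMem hq] at h4
      obtain ⟨p, hp, p', hp', hpR, hp'R, hpC, hp'C, hne⟩ := hsplit a b c h4
      exact ⟨p, mem_insert_of_mem hp, p', mem_insert_of_mem hp', hpR, hp'R, hCC' hpC, hCC' hp'C,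
        by rwa [hpar _ hpC, hpar _ hp'C]⟩

theorem stmt3_general (P : Finset (ℝ × ℝ))
    (hx : ∀ p ∈ P, ∀ q ∈ P, p.1 = q.1 → p = q) :
    ∃ f : ℝ × ℝ → Fin 2, ∀ a b c : ℝ, a < b →
      4 ≤ (bottomless a b c ∩ ↑P).ncard →
      ∃ p ∈ P, ∃ q ∈ P, p ∈ bottomless a b c ∧ q ∈ bottomless a b c ∧ f p ≠ f q := by
  obtain ⟨C, -, -, hsplit⟩ := exists_isSeparatedBy_splitsBottomless P fun p hp q hq => hx p hp q hq
  -- `ZMod 2` is definitionally `Fin 2`.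
  refine ⟨fun p => parityBelow C p.1, fun a b c _ h4 => ?_⟩
  obtain ⟨p, hp, p', hp', hpR, hp'R, -, -, hne⟩ := hsplit a b c h4
  exact ⟨p, hp, p', hp', hpR, hp'R, hne⟩

theorem stmt3 (P : Finset (ℝ × ℝ))
    (hx : ∀ p ∈ P, ∀ q ∈ P, p.1 = q.1 → p = q)
    (hy : ∀ p ∈ P, ∀ q ∈ P, p.2 = q.2 → p = q) :
    ∃ f : ℝ × ℝ → Fin 2, ∀ a b c : ℝ, a < b →
      4 ≤ (bottomless a b c ∩ ↑P).ncard →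
      ∃ p ∈ P, ∃ q ∈ P, p ∈ bottomless a b c ∧ q ∈ bottomless a b c ∧ f p ≠ f q :=
  stmt3_general P hx
end

section
/- Any finite set of points in the plane can be colored with 4 colors such that every closed half-plane containing at least 2 of the points contains two points of different colors. -/
/-!
Colour the vertices of the convex hull of `P` properly in three colours along the hull
edges (every hull vertex lies on at most two of them) and give all interior points the
fourth colour. A half-plane containing two points of `P` contains the two lowest points
`p, q` of `P` in its inward normal direction `u`. Either `pq` is a hull edge, or `p` is a
hull vertex and `q` is not: if `q` is a hull vertex, say the strict minimum in direction
`w`, then rotating `u` towards `w` until `p` and `q` are level yields a supporting line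
through `p` and `q`. In both cases `p` and `q` get different colours.
-/

def halfPlane (a b c : ℝ) : Set (ℝ × ℝ) := {p | a * p.1 + b * p.2 ≤ c}

def GenPos (P : Finset (ℝ × ℝ)) : Prop :=
  ∀ p ∈ P, ∀ q ∈ P, ∀ r ∈ P, p ≠ q → p ≠ r → q ≠ r →
    ¬ Collinear ℝ ({p, q, r} : Set (ℝ × ℝ))

open Finset

theorem SimpleGraph.exists_fin_coloring_of_card_neighbors_le {α : Type*} [DecidableEq α]
    (G : SimpleGraph α) [DecidableRel G.Adj] {k : ℕ} (s : Finset α)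
    (h : ∀ x ∈ s, #{y ∈ s | G.Adj x y} ≤ k) :
    ∃ g : α → Fin (k + 1), ∀ x ∈ s, ∀ y ∈ s, G.Adj x y → g x ≠ g y := by
  induction s using Finset.induction_on with
  | empty => exact ⟨fun _ => 0, by simp⟩
  | @insert a s ha ih =>
    have hs : ∀ x ∈ s, #{y ∈ s | G.Adj x y} ≤ k := fun x hx =>
      (card_le_card (filter_subset_filter _ (subset_insert a s))).trans
        (h x (mem_insert_of_mem hx))
    obtain ⟨g, hg⟩ := ih hs
    have hfree : #(image g {y ∈ s | G.Adj a y}) < #(univ : Finset (Fin (k + 1))) := by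
      calc #(image g {y ∈ s | G.Adj a y}) ≤ #{y ∈ s | G.Adj a y} := card_image_le
        _ ≤ #{y ∈ insert a s | G.Adj a y} :=
          card_le_card (filter_subset_filter _ (subset_insert a s))
        _ < #(univ : Finset (Fin (k + 1))) := by
          simpa using Nat.lt_succ_of_le (h a (mem_insert_self a s))
    obtain ⟨c, -, hc⟩ := exists_mem_notMem_of_card_lt_card hfree
    have hca : ∀ y ∈ s, G.Adj a y → c ≠ g y := fun y hy hay hcy =>
      hc (hcy ▸ mem_image_of_mem g (mem_filter.mpr ⟨hy, hay⟩))
    have hne : ∀ y ∈ s, y ≠ a := fun y hy hya => ha (hya ▸ hy)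
    refine ⟨Function.update g a c, ?_⟩
    intro x hx y hy hxy
    rcases mem_insert.mp hx with rfl | hxs <;> rcases mem_insert.mp hy with rfl | hys
    · exact absurd hxy (G.loopless.irrefl _)
    · simpa [Function.update_of_ne (hne y hys)] using hca y hys hxy
    · simpa [Function.update_of_ne (hne x hxs)] using (hca x hxs hxy.symm).symm
    · simpa [Function.update_of_ne (hne x hxs), Function.update_of_ne (hne y hys)]
        using hg x hxs y hys hxy

namespace PlanarHull

def dot (u p : ℝ × ℝ) : ℝ := u.1 * p.1 + u.2 * p.2

def cross (x y : ℝ × ℝ) : ℝ := x.1 * y.2 - x.2 * y.1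

lemma dot_sub (u p q : ℝ × ℝ) : dot u (p - q) = dot u p - dot u q := by
  simp only [dot, Prod.fst_sub, Prod.snd_sub]; ring

lemma dot_self_pos {d : ℝ × ℝ} (hd : d ≠ 0) : 0 < dot d d := by
  have : d.1 ≠ 0 ∨ d.2 ≠ 0 := by
    by_contra! h
    exact hd (Prod.ext h.1 h.2)
  simp only [dot, ← sq]
  rcases this with h | h <;> positivity

lemma collinear_of_dot_eq {u : ℝ × ℝ} (hu : u ≠ 0) {c : ℝ} {s : Set (ℝ × ℝ)}
    (hs : ∀ x ∈ s, dot u x = c) : Collinear ℝ s := by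
  rcases s.eq_empty_or_nonempty with rfl | ⟨x₀, hx₀⟩
  · exact collinear_empty ℝ _
  rw [collinear_iff_of_mem hx₀]
  refine ⟨(-u.2, u.1), fun x hx => ⟨cross u (x - x₀) / dot u u, ?_⟩⟩
  have hx : dot u (x - x₀) = 0 := by rw [dot_sub, hs x hx, hs x₀ hx₀, sub_self]
  have hu2 : u.1 ^ 2 + u.2 ^ 2 ≠ 0 := by simpa only [dot, sq] using (dot_self_pos hu).ne'
  simp only [dot, cross, Prod.fst_sub, Prod.snd_sub] at hx ⊢
  ext <;> simp only [Prod.smul_mk, smul_eq_mul, vadd_eq_add, Prod.fst_add, Prod.snd_add] <;>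
    field_simp
  · linear_combination u.1 * hx
  · linear_combination u.2 * hx

lemma cross_mul_cross_pos {v d x y : ℝ × ℝ} (hd : d ≠ 0) (hvd : dot v d = 0)
    (hx : 0 < dot v x) (hy : 0 < dot v y) : 0 < cross d x * cross d y := by
  have lagrange : ∀ z, dot d d * dot v z = cross d v * cross d z := fun z => by
    simp only [dot, cross] at hvd ⊢
    linear_combination (d.1 * z.1 + d.2 * z.2) * hvd
  have hdd := dot_self_pos hd
  have hvx : 0 < cross d v * cross d x := lagrange x ▸ mul_pos hdd hx
  have hvy : 0 < cross d v * cross d y := lagrange y ▸ mul_pos hdd hy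
  nlinarith [mul_pos hvx hvy, sq_nonneg (cross d v)]

lemma cross_swap (x y : ℝ × ℝ) : cross y x = -cross x y := by
  simp only [cross]; ring

variable (P : Finset (ℝ × ℝ))

/-- `v` may vanish here only when `P = {p, q}`. -/
def IsHullEdge (p q : ℝ × ℝ) : Prop :=
  p ∈ P ∧ q ∈ P ∧ p ≠ q ∧ ∃ v : ℝ × ℝ, dot v p = dot v q ∧
    ∀ r ∈ P, r ≠ p → r ≠ q → dot v p < dot v r

def IsHullVertex (p : ℝ × ℝ) : Prop :=
  p ∈ P ∧ ∃ w : ℝ × ℝ, ∀ r ∈ P, r ≠ p → dot w p < dot w r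

variable {P}

lemma IsHullEdge.symm {p q : ℝ × ℝ} (h : IsHullEdge P p q) : IsHullEdge P q p := by
  obtain ⟨hp, hq, hpq, v, hv, hlt⟩ := h
  exact ⟨hq, hp, hpq.symm, v, hv.symm, fun r hr hrq hrp => hv ▸ hlt r hr hrp hrq⟩

/-- The vectors from `p` to its three hull neighbours would pairwise lie on the same side of
each other, which is impossible for the signs of three cross products. -/
lemma not_isHullEdge_three {p q₁ q₂ q₃ : ℝ × ℝ} (h₁ : IsHullEdge P p q₁)
    (h₂ : IsHullEdge P p q₂) (h₃ : IsHullEdge P p q₃)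
    (h₁₂ : q₁ ≠ q₂) (h₁₃ : q₁ ≠ q₃) (h₂₃ : q₂ ≠ q₃) : False := by
  obtain ⟨-, hq₁, hpq₁, v₁, he₁, hlt₁⟩ := h₁
  obtain ⟨-, hq₂, hpq₂, v₂, he₂, hlt₂⟩ := h₂
  obtain ⟨-, hq₃, hpq₃, v₃, he₃, hlt₃⟩ := h₃
  have level : ∀ {v q}, dot v p = dot v q → dot v (q - p) = 0 := fun h => by
    rw [dot_sub, h, sub_self]
  have above : ∀ {v r}, dot v p < dot v r → 0 < dot v (r - p) := fun h => by
    rw [dot_sub]; linarith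
  have nz : ∀ {q}, p ≠ q → q - p ≠ 0 := fun h => sub_ne_zero.mpr (Ne.symm h)
  have s₁ := cross_mul_cross_pos (nz hpq₁) (level he₁)
    (above (hlt₁ q₂ hq₂ hpq₂.symm h₁₂.symm)) (above (hlt₁ q₃ hq₃ hpq₃.symm h₁₃.symm))
  have s₂ := cross_mul_cross_pos (nz hpq₂) (level he₂)
    (above (hlt₂ q₁ hq₁ hpq₁.symm h₁₂)) (above (hlt₂ q₃ hq₃ hpq₃.symm h₂₃.symm))
  have s₃ := cross_mul_cross_pos (nz hpq₃) (level he₃)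
    (above (hlt₃ q₁ hq₁ hpq₁.symm h₁₃)) (above (hlt₃ q₂ hq₂ hpq₂.symm h₂₃))
  rw [cross_swap (q₁ - p) (q₂ - p)] at s₂
  rw [cross_swap (q₁ - p) (q₃ - p), cross_swap (q₂ - p) (q₃ - p)] at s₃
  nlinarith [mul_pos s₁ s₃, sq_nonneg (cross (q₁ - p) (q₃ - p))]

/-- Tilting the supporting direction `v` slightly towards `q - p` leaves `p` alone at the
bottom. -/
lemma IsHullEdge.isHullVertex {p q : ℝ × ℝ} (h : IsHullEdge P p q) : IsHullVertex P p := by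
  obtain ⟨hp, -, hpq, v, hv, hlt⟩ := h
  have near : ∀ r ∈ P, r ≠ p → r ≠ q →
      ∀ᶠ t in nhds (0 : ℝ), 0 < dot v (r - p) + t * dot (q - p) (r - p) := by
    intro r hr hrp hrq
    have hpos : 0 < dot v (r - p) := by rw [dot_sub]; linarith [hlt r hr hrp hrq]
    refine Filter.Tendsto.eventually_const_lt hpos ?_
    simpa using ((continuous_id.mul continuous_const).const_add (dot v (r - p))).tendsto 0
  have hall : ∀ᶠ t in nhds (0 : ℝ), ∀ r ∈ P.filter (fun r => r ≠ p ∧ r ≠ q),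
      0 < dot v (r - p) + t * dot (q - p) (r - p) := by
    rw [Filter.eventually_all_finset]
    intro r hr
    rw [mem_filter] at hr
    exact near r hr.1 hr.2.1 hr.2.2
  obtain ⟨t, ht, ht0⟩ := ((hall.filter_mono nhdsWithin_le_nhds).and
    (self_mem_nhdsWithin : ∀ᶠ t in nhdsWithin (0 : ℝ) (Set.Ioi 0), 0 < t)).exists
  refine ⟨hp, v + t • (q - p), fun r hr hrp => ?_⟩
  have key : dot (v + t • (q - p)) r - dot (v + t • (q - p)) p
      = dot v (r - p) + t * dot (q - p) (r - p) := by
    simp only [dot, Prod.fst_add, Prod.snd_add, Prod.smul_fst, Prod.smul_snd, Prod.fst_sub,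
      Prod.snd_sub, smul_eq_mul]
    ring
  suffices 0 < dot v (r - p) + t * dot (q - p) (r - p) by linarith
  by_cases hrq : r = q
  · subst hrq
    rw [dot_sub, hv, sub_self, zero_add]
    exact mul_pos ht0 (dot_self_pos (sub_ne_zero.mpr hrp))
  · exact ht r (mem_filter.mpr ⟨hr, hrp, hrq⟩)

variable (P) in
def hullGraph : SimpleGraph (ℝ × ℝ) where
  Adj := IsHullEdge P
  symm := ⟨fun _ _ => IsHullEdge.symm⟩
  loopless := ⟨fun _ h => h.2.2.1 rfl⟩

lemma card_hullGraph_neighbors_le_two [DecidableRel (hullGraph P).Adj] (p : ℝ × ℝ) :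
    #{q ∈ P | (hullGraph P).Adj p q} ≤ 2 := by
  by_contra! h
  obtain ⟨q₁, q₂, q₃, hq₁, hq₂, hq₃, h₁₂, h₁₃, h₂₃⟩ := two_lt_card_iff.mp h
  simp only [mem_filter] at hq₁ hq₂ hq₃
  exact not_isHullEdge_three hq₁.2 hq₂.2 hq₃.2 h₁₂ h₁₃ h₂₃

/-- The positive combination of `u` and `w` that levels `p` and `q` supports the edge `pq`. -/
lemma isHullEdge_of_isHullVertex {u p q : ℝ × ℝ} (hp : p ∈ P) (hpq : p ≠ q)
    (hqmin : ∀ r ∈ P, r ≠ p → dot u q ≤ dot u r) (hlt : dot u p < dot u q)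
    (hq : IsHullVertex P q) : IsHullEdge P p q := by
  obtain ⟨hqP, w, hw⟩ := hq
  set α := dot u q - dot u p
  set β := dot w p - dot w q
  have hα : 0 < α := sub_pos.mpr hlt
  have hβ : 0 < β := sub_pos.mpr (hw p hp hpq)
  have hcomb : ∀ x, dot (β • u + α • w) x = β * dot u x + α * dot w x := fun x => by
    simp only [dot, Prod.fst_add, Prod.snd_add, Prod.smul_fst, Prod.smul_snd, smul_eq_mul]
    ring
  have hlevel : dot (β • u + α • w) p = dot (β • u + α • w) q := by
    rw [hcomb, hcomb]; ring
  refine ⟨hp, hqP, hpq, β • u + α • w, hlevel, fun r hr hrp hrq => ?_⟩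
  rw [hlevel, hcomb, hcomb]
  nlinarith [hqmin r hr hrp, hw r hr hrq]

lemma isHullEdge_of_dot_eq (hP : GenPos P) {u p q : ℝ × ℝ} (hu : u ≠ 0) (hp : p ∈ P)
    (hq : q ∈ P) (hpq : p ≠ q) (hpmin : ∀ r ∈ P, dot u p ≤ dot u r)
    (hlevel : dot u p = dot u q) : IsHullEdge P p q := by
  refine ⟨hp, hq, hpq, u, hlevel, fun r hr hrp hrq => (hpmin r hr).lt_of_ne fun hr_eq => ?_⟩
  refine hP p hp q hq r hr hpq (Ne.symm hrp) (Ne.symm hrq)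
    (collinear_of_dot_eq hu (c := dot u p) ?_)
  simp only [Set.mem_insert_iff, Set.mem_singleton_iff]
  rintro x (rfl | rfl | rfl)
  exacts [rfl, hlevel.symm, hr_eq.symm]

lemma isHullEdge_or_isHullVertex_not (hP : GenPos P) {u p q : ℝ × ℝ} (hu : u ≠ 0)
    (hp : p ∈ P) (hq : q ∈ P) (hpq : p ≠ q) (hpmin : ∀ r ∈ P, dot u p ≤ dot u r)
    (hqmin : ∀ r ∈ P, r ≠ p → dot u q ≤ dot u r) :
    IsHullEdge P p q ∨ (IsHullVertex P p ∧ ¬ IsHullVertex P q) := by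
  rcases (hpmin q hq).eq_or_lt with hlevel | hlt
  · exact Or.inl (isHullEdge_of_dot_eq hP hu hp hq hpq hpmin hlevel)
  by_cases hqv : IsHullVertex P q
  · exact Or.inl (isHullEdge_of_isHullVertex hp hpq hqmin hlt hqv)
  · exact Or.inr ⟨⟨hp, u, fun r hr hrp => hlt.trans_le (hqmin r hr hrp)⟩, hqv⟩

lemma exists_two_lowest_mem_halfPlane {a b c : ℝ} (h : 2 ≤ (halfPlane a b c ∩ ↑P).ncard) :
    ∃ p ∈ P, ∃ q ∈ P, p ≠ q ∧ p ∈ halfPlane a b c ∧ q ∈ halfPlane a b c ∧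
      (∀ r ∈ P, dot (a, b) p ≤ dot (a, b) r) ∧
      (∀ r ∈ P, r ≠ p → dot (a, b) q ≤ dot (a, b) r) := by
  classical
  obtain ⟨s₁, ⟨hs₁H, hs₁P⟩, s₂, ⟨hs₂H, hs₂P⟩, hs₁₂⟩ :=
    (Set.one_lt_ncard (P.finite_toSet.inter_of_right _)).mp h
  obtain ⟨p, hp, hpmin⟩ := P.exists_min_image (dot (a, b)) ⟨s₁, hs₁P⟩
  obtain ⟨s, hsP, hsp, hsH⟩ : ∃ s ∈ P, s ≠ p ∧ s ∈ halfPlane a b c := by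
    rcases eq_or_ne s₁ p with rfl | hs₁p
    · exact ⟨s₂, hs₂P, Ne.symm hs₁₂, hs₂H⟩
    · exact ⟨s₁, hs₁P, hs₁p, hs₁H⟩
  obtain ⟨q, hq, hqmin⟩ := (P.erase p).exists_min_image (dot (a, b)) ⟨s, mem_erase.mpr ⟨hsp, hsP⟩⟩
  have hqmin' : ∀ r ∈ P, r ≠ p → dot (a, b) q ≤ dot (a, b) r :=
    fun r hr hrp => hqmin r (mem_erase.mpr ⟨hrp, hr⟩)
  obtain ⟨hqp, hqP⟩ := mem_erase.mp hq
  exact ⟨p, hp, q, hqP, Ne.symm hqp, (hpmin s₁ hs₁P).trans hs₁H,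
    (hqmin' s hsP hsp).trans hsH, hpmin, hqmin'⟩

variable (P) in
open Classical in
noncomputable def hullColoring (g : ℝ × ℝ → Fin 3) (x : ℝ × ℝ) : Fin 4 :=
  if IsHullVertex P x then (g x).castSucc else Fin.last 3

end PlanarHull

open PlanarHull in
theorem stmt7 (P : Finset (ℝ × ℝ)) (hP : GenPos P) :
    ∃ f : ℝ × ℝ → Fin 4, ∀ a b c : ℝ, (a, b) ≠ ((0 : ℝ), (0 : ℝ)) →
      2 ≤ (halfPlane a b c ∩ ↑P).ncard →
      ∃ p ∈ P, ∃ q ∈ P, p ∈ halfPlane a b c ∧ q ∈ halfPlane a b c ∧ f p ≠ f q := by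
  classical
  obtain ⟨g, hg⟩ := (hullGraph P).exists_fin_coloring_of_card_neighbors_le P
    fun p _ => card_hullGraph_neighbors_le_two p
  refine ⟨hullColoring P g, fun a b c hab h2 => ?_⟩
  obtain ⟨p, hp, q, hq, hpq, hpH, hqH, hpmin, hqmin⟩ := exists_two_lowest_mem_halfPlane h2
  refine ⟨p, hp, q, hq, hpH, hqH, ?_⟩
  rcases isHullEdge_or_isHullVertex_not hP hab hp hq hpq hpmin hqmin with hpq | ⟨hpv, hqv⟩
  · simp only [hullColoring, if_pos hpq.isHullVertex, if_pos hpq.symm.isHullVertex, ne_eq,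
      Fin.castSucc_inj]
    exact hg p hp q hq hpq
  · simp only [hullColoring, if_pos hpv, if_neg hqv]
    exact (Fin.castSucc_lt_last (g p)).ne
end

section
/- Let P be the set of 4 points consisting of the vertices of a triangle together with one point strictly inside the triangle. Then any coloring of P with 3 colors admits a half-plane containing exactly 2 points of P, both of the same color; i.e., 4 colors are necessary for a 2-proper half-plane coloring of P. -/
open Set

namespace AffineMap

lemma exists_halfPlane_eq_setOf_le (φ : ℝ × ℝ →ᵃ[ℝ] ℝ) {u v : ℝ × ℝ} (huv : φ u ≠ φ v)
    (t : ℝ) : ∃ a b c : ℝ, (a, b) ≠ ((0 : ℝ), (0 : ℝ)) ∧ halfPlane a b c = {z | φ z ≤ t} := by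
  have hφ : ∀ z : ℝ × ℝ, φ z = φ.linear (1, 0) * z.1 + φ.linear (0, 1) * z.2 + φ 0 := by
    intro z
    have hz : z = z.1 • ((1 : ℝ), (0 : ℝ)) + z.2 • ((0 : ℝ), (1 : ℝ)) := by ext <;> simp
    rw [congrFun φ.decomp z, Pi.add_apply, hz, map_add, map_smul, map_smul, ← hz]
    simp only [smul_eq_mul, mul_comm]
  refine ⟨φ.linear (1, 0), φ.linear (0, 1), t - φ 0, fun h => huv ?_, ?_⟩
  · simp only [Prod.mk.injEq] at h
    rw [hφ u, hφ v, h.1, h.2]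
    ring
  · ext z
    simp only [halfPlane, mem_ofPred_eq, hφ z]
    constructor <;> intro h <;> linarith

lemma exists_halfPlane_eq_setOf_ge (φ : ℝ × ℝ →ᵃ[ℝ] ℝ) {u v : ℝ × ℝ} (huv : φ u ≠ φ v)
    (t : ℝ) : ∃ a b c : ℝ, (a, b) ≠ ((0 : ℝ), (0 : ℝ)) ∧ halfPlane a b c = {z | t ≤ φ z} := by
  obtain ⟨a, b, c, hab, h⟩ :=
    (-φ).exists_halfPlane_eq_setOf_le (u := u) (v := v) (by simpa using huv) (-t)
  exact ⟨a, b, c, hab, by simp [h]⟩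

end AffineMap

namespace AffineBasis

section Triangle

variable {k V P : Type*} [Field k] [AddCommGroup V] [Module k V] [AddTorsor V P]
  [FiniteDimensional k V]

def ofNotCollinear (hV : Module.finrank k V = 2) {p q r : P} (h : ¬ Collinear k {p, q, r}) :
    AffineBasis (Fin 3) k P :=
  ⟨![p, q, r], affineIndependent_iff_not_collinear_set.2 h,
    (affineIndependent_iff_not_collinear_set.2 h).affineSpan_eq_top_iff_card_eq_finrank_add_one.2
      (by simp [hV])⟩

lemma range_ofNotCollinear (hV : Module.finrank k V = 2) {p q r : P}
    (h : ¬ Collinear k {p, q, r}) : range (ofNotCollinear hV h) = {p, q, r} := by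
  change range ![p, q, r] = _
  simp only [Matrix.range_cons, Matrix.range_empty, union_empty, singleton_union]

end Triangle

section Coord

variable {ι V P : Type*} [AddCommGroup V] [Module ℝ V] [AddTorsor V P]
  (b : AffineBasis ι ℝ P) {x : P}

lemma coord_lt_one_of_forall_coord_pos [Fintype ι] [Nontrivial ι] (hx : ∀ i, 0 < b.coord i x)
    (i : ι) : b.coord i x < 1 := by
  obtain ⟨j, hji⟩ := exists_ne i
  rw [← b.sum_coord_apply_eq_one x]
  exact Finset.single_lt_sum hji (Finset.mem_univ i) (Finset.mem_univ j) (hx j)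
    fun l _ _ => (hx l).le

lemma notMem_range_of_forall_coord_pos [Nontrivial ι] (hx : ∀ i, 0 < b.coord i x) :
    x ∉ range b := by
  rintro ⟨i, rfl⟩
  obtain ⟨j, hji⟩ := exists_ne i
  simpa [b.coord_apply_ne hji] using hx j

lemma encard_insert_range_of_forall_coord_pos [Fintype ι] [Nontrivial ι]
    (hx : ∀ i, 0 < b.coord i x) : (insert x (range b)).encard = Fintype.card ι + 1 := by
  rw [encard_insert_of_notMem (b.notMem_range_of_forall_coord_pos hx), ← image_univ,
    b.ind.injective.injOn.encard_image, encard_univ, ENat.card_eq_coe_fintype_card]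

lemma insert_range_inter_setOf_coord_nonpos (hx : ∀ i, 0 < b.coord i x) (k : ι) :
    insert x (range b) ∩ {z | b.coord k z ≤ 0} = b '' {k}ᶜ := by
  ext w
  constructor
  · rintro ⟨rfl | ⟨l, rfl⟩, hw⟩
    · exact absurd hw (hx k).not_ge
    · refine ⟨l, fun hlk => ?_, rfl⟩
      rw [mem_singleton_iff.1 hlk, mem_ofPred_eq, b.coord_apply_eq] at hw
      exact absurd hw one_pos.not_ge
  · rintro ⟨l, hl, rfl⟩
    exact ⟨Or.inr ⟨l, rfl⟩, (b.coord_apply_ne (Ne.symm hl)).le⟩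

lemma insert_range_inter_setOf_coord_ge [Fintype ι] [Nontrivial ι] (hx : ∀ i, 0 < b.coord i x)
    (i : ι) : insert x (range b) ∩ {z | b.coord i x ≤ b.coord i z} = {x, b i} := by
  ext w
  constructor
  · rintro ⟨rfl | ⟨l, rfl⟩, hw⟩
    · exact Or.inl rfl
    · obtain rfl | hli := eq_or_ne l i
      · exact Or.inr rfl
      · rw [mem_ofPred_eq, b.coord_apply_ne (Ne.symm hli)] at hw
        exact absurd hw (hx i).not_ge
  · rintro (rfl | rfl)
    · exact ⟨mem_insert w _, le_refl (b.coord i w)⟩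
    · refine ⟨Or.inr ⟨i, rfl⟩, ?_⟩
      rw [mem_ofPred_eq, b.coord_apply_eq]
      exact (b.coord_lt_one_of_forall_coord_pos hx i).le

end Coord

lemma exists_halfPlane_inter_eq_pair (b : AffineBasis (Fin 3) ℝ (ℝ × ℝ)) {x u v : ℝ × ℝ}
    (hx : ∀ i, 0 < b.coord i x) (hu : u ∈ insert x (range b)) (hv : v ∈ insert x (range b))
    (huv : u ≠ v) : ∃ a b' c : ℝ, (a, b') ≠ ((0 : ℝ), (0 : ℝ)) ∧
      insert x (range b) ∩ halfPlane a b' c = {u, v} := by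
  have interior_vertex : ∀ i, ∃ a b' c : ℝ, (a, b') ≠ ((0 : ℝ), (0 : ℝ)) ∧
      insert x (range b) ∩ halfPlane a b' c = {x, b i} := by
    intro i
    have hne : b.coord i (b i) ≠ b.coord i x := by
      rw [b.coord_apply_eq]
      exact (b.coord_lt_one_of_forall_coord_pos hx i).ne'
    obtain ⟨a, b', c, hab, hH⟩ := (b.coord i).exists_halfPlane_eq_setOf_ge hne (b.coord i x)
    exact ⟨a, b', c, hab, hH ▸ b.insert_range_inter_setOf_coord_ge hx i⟩
  rcases hu with rfl | ⟨i, rfl⟩ <;> rcases hv with rfl | ⟨j, rfl⟩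
  · exact absurd rfl huv
  · exact interior_vertex j
  · rw [pair_comm]
    exact interior_vertex i
  · have hij : i ≠ j := fun h => huv (h ▸ rfl)
    obtain ⟨k, hki, hkj⟩ : ∃ k : Fin 3, k ≠ i ∧ k ≠ j := by
      fin_cases i <;> fin_cases j <;> simp_all <;> decide
    have hne : b.coord k (b k) ≠ b.coord k (b i) := by simp [b.coord_apply_ne hki]
    obtain ⟨a, b', c, hab, hH⟩ := (b.coord k).exists_halfPlane_eq_setOf_le hne 0
    refine ⟨a, b', c, hab, ?_⟩
    rw [hH, b.insert_range_inter_setOf_coord_nonpos hx k, ← image_pair]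
    congr 1
    ext l
    simp only [mem_compl_iff, mem_singleton_iff, mem_insert_iff]
    omega

end AffineBasis

theorem stmt8 (q1 q2 q3 x : ℝ × ℝ)
    (htri : ¬ Collinear ℝ ({q1, q2, q3} : Set (ℝ × ℝ)))
    (hx : x ∈ interior (convexHull ℝ ({q1, q2, q3} : Set (ℝ × ℝ))))
    (f : ℝ × ℝ → Fin 3) :
    ∃ a b c : ℝ, (a, b) ≠ ((0 : ℝ), (0 : ℝ)) ∧
      ∃ u v : ℝ × ℝ, u ≠ v ∧
        u ∈ ({q1, q2, q3, x} : Set (ℝ × ℝ)) ∧ v ∈ ({q1, q2, q3, x} : Set (ℝ × ℝ)) ∧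
        u ∈ halfPlane a b c ∧ v ∈ halfPlane a b c ∧ f u = f v ∧
        ∀ w ∈ ({q1, q2, q3, x} : Set (ℝ × ℝ)), w ∈ halfPlane a b c → w = u ∨ w = v := by
  have hV : Module.finrank ℝ (ℝ × ℝ) = 2 := by simp
  set B := AffineBasis.ofNotCollinear hV htri
  rw [← AffineBasis.range_ofNotCollinear hV htri, B.interior_convexHull] at hx
  have hT : ({q1, q2, q3, x} : Set (ℝ × ℝ)) = insert x (range B) := by
    rw [AffineBasis.range_ofNotCollinear]
    ext
    simp only [mem_insert_iff, mem_singleton_iff]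
    tauto
  rw [hT]
  obtain ⟨u, hu, v, hv, huv, hf⟩ := exists_ne_map_eq_of_encard_lt_of_maps_to (t := univ)
    (by rw [B.encard_insert_range_of_forall_coord_pos hx]; norm_num) (mapsTo_univ f _)
  obtain ⟨a, b, c, hab, hH⟩ := B.exists_halfPlane_inter_eq_pair hx hu hv huv
  obtain ⟨huH, hvH⟩ : u ∈ halfPlane a b c ∧ v ∈ halfPlane a b c :=
    pair_subset_iff.1 (hH ▸ inter_subset_right)
  refine ⟨a, b, c, hab, u, v, huv, hu, hv, huH, hvH, hf, fun w hw hwH => ?_⟩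
  simpa using hH.subset ⟨hw, hwH⟩
end

section
/- Let P be a finite set of points in general position (no 3 collinear) that is not of the form 'one point strictly inside the triangle formed by 3 other points with |P| = 4'. Then P can be colored with 3 colors such that every half-plane containing at least 2 points of P contains two points of different colors. -/
open Finset Filter Topology Module

theorem SimpleGraph.colorable_of_forall_exists_card_adj_le {α : Type*} (G : SimpleGraph α)
    [DecidableRel G.Adj] (S : Finset α) (hS : ∀ ⦃v w⦄, G.Adj v w → v ∈ S) (k : ℕ)
    (hdeg : ∀ T ⊆ S, T.Nonempty → ∃ v ∈ T, #{w ∈ T | G.Adj v w} ≤ k) :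
    G.Colorable (k + 1) := by
  classical
  suffices h : ∀ T ⊆ S, ∃ f : α → Fin (k + 1), ∀ v ∈ T, ∀ w ∈ T, G.Adj v w → f v ≠ f w by
    obtain ⟨f, hf⟩ := h S subset_rfl
    exact ⟨.mk f fun hvw => hf _ (hS hvw) _ (hS hvw.symm) hvw⟩
  intro T
  induction T using Finset.strongInduction with
  | _ T ih =>
  intro hTS
  obtain rfl | hT := T.eq_empty_or_nonempty
  · exact ⟨0, by simp⟩
  obtain ⟨v, hv, hvdeg⟩ := hdeg T hTS hT
  obtain ⟨f, hf⟩ := ih (T.erase v) (erase_ssubset hv) ((erase_subset v T).trans hTS)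
  obtain ⟨c, -, hc⟩ : ∃ c ∈ univ, c ∉ image f {w ∈ T | G.Adj v w} :=
    exists_mem_notMem_of_card_lt_card <| card_image_le.trans_lt <| by
      simpa using Nat.lt_succ_of_le hvdeg
  have hc' : ∀ w ∈ T, G.Adj v w → f w ≠ c := fun w hw hvw hwc =>
    hc (mem_image.2 ⟨w, mem_filter.2 ⟨hw, hvw⟩, hwc⟩)
  refine ⟨Function.update f v c, fun x hx y hy hxy => ?_⟩
  rcases eq_or_ne x v with rfl | hxv
  · simpa [hxy.ne'] using (hc' y hy hxy).symm
  rcases eq_or_ne y v with rfl | hyv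
  · simpa [hxv] using hc' x hx hxy.symm
  simpa [hxv, hyv] using hf x (mem_erase.2 ⟨hxv, hx⟩) y (mem_erase.2 ⟨hyv, hy⟩) hxy

namespace AffineBasis

variable {ι E : Type*} [Fintype ι] [AddCommGroup E] [Module ℝ E] (B : AffineBasis ι ℝ E)

theorem mem_convexHull_image_compl_of_coord_eq_zero {q : E} (hq : q ∈ convexHull ℝ (Set.range B))
    {i : ι} (hi : B.coord i q = 0) : q ∈ convexHull ℝ (B '' {i}ᶜ) := by
  classical
  rw [B.convexHull_eq_nonneg_coord] at hq
  have hsum : ∑ j ∈ univ.erase i, B.coord j q = 1 := by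
    rw [sum_erase (f := fun j => B.coord j q) _ hi, B.sum_coord_apply_eq_one]
  have hq_eq : ∑ j ∈ univ.erase i, B.coord j q • B j = q := by
    rw [sum_erase (f := fun j => B.coord j q • B j) _ (by simp [hi]),
      B.linear_combination_coord_eq_self]
  rw [← hq_eq]
  exact (convex_convexHull ℝ _).sum_mem (fun j _ => hq j) hsum fun j hj =>
    subset_convexHull ℝ _ ⟨j, (mem_erase.1 hj).1, rfl⟩

theorem exists_mem_convexHull_insert_image_compl [Nonempty ι] {q : E}
    (hq : ∀ i, 0 < B.coord i q) (r : E) : ∃ i, q ∈ convexHull ℝ (insert r (B '' {i}ᶜ)) := by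
  classical
  -- For `i` maximising `m = coord i r / coord i q`, `q = m⁻¹ • r + ∑ j, w j • B j` is a convex
  -- combination whose weight at `B i` vanishes.
  obtain ⟨i, hi⟩ := Finite.exists_max fun j => B.coord j r / B.coord j q
  set m := B.coord i r / B.coord i q
  obtain ⟨j, hj⟩ : ∃ j, 0 < B.coord j r := by
    by_contra! h
    have := B.sum_coord_apply_eq_one r
    linarith [sum_nonpos fun j (_ : j ∈ univ) => h j]
  have hm : 0 < m := (div_pos hj (hq j)).trans_le (hi j)
  let w : Option ι → ℝ := fun o => o.elim m⁻¹ fun j => B.coord j q - m⁻¹ * B.coord j r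
  let z : Option ι → E := fun o => o.elim r B
  have hwi : w (some i) = 0 := by
    have : B.coord i r ≠ 0 := by
      rintro h0
      simp [m, h0] at hm
    simp only [w, Option.elim_some, m]
    field_simp
    ring
  have hw : ∀ o, 0 ≤ w o := by
    rintro (_ | j)
    · exact (inv_pos.2 hm).le
    · have := (div_le_iff₀ (hq j)).1 (hi j)
      simp only [w, Option.elim_some, sub_nonneg]
      rw [inv_mul_le_iff₀ hm]
      linarith
  have hsum : ∑ o ∈ univ.erase (some i), w o = 1 := by
    rw [sum_erase (f := w) _ hwi, Fintype.sum_option]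
    simp only [w, Option.elim_none, Option.elim_some, sum_sub_distrib, ← mul_sum,
      B.sum_coord_apply_eq_one]
    ring
  have hq_eq : ∑ o ∈ univ.erase (some i), w o • z o = q := by
    rw [sum_erase (f := fun o => w o • z o) _ (by simp [hwi]), Fintype.sum_option]
    simp only [w, z, Option.elim_none, Option.elim_some, sub_smul, sum_sub_distrib, mul_smul,
      ← smul_sum, B.linear_combination_coord_eq_self]
    abel
  refine ⟨i, hq_eq ▸ (convex_convexHull ℝ _).sum_mem (fun o _ => hw o) hsum fun o ho => ?_⟩
  refine subset_convexHull ℝ _ ?_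
  rcases o with _ | j
  · exact Set.mem_insert _ _
  · exact Set.mem_insert_of_mem _ ⟨j, fun h => (mem_erase.1 ho).1 (congrArg some h), rfl⟩

end AffineBasis

theorem eventually_add_mul_lt_of_toLex_lt {x₁ y₁ x₂ y₂ : ℝ}
    (h : toLex (x₁, y₁) < toLex (x₂, y₂)) :
    ∀ᶠ δ in 𝓝[>] 0, x₁ + δ * y₁ < x₂ + δ * y₂ := by
  rcases Prod.Lex.toLex_lt_toLex.1 h with hx | ⟨rfl, hy⟩
  · refine nhdsWithin_le_nhds (ContinuousAt.eventually_lt (by fun_prop) (by fun_prop) ?_)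
    simpa using hx
  · exact eventually_nhdsWithin_of_forall fun δ (hδ : 0 < δ) => by gcongr

theorem injective_toLex_rotate {a b : ℝ} (hab : (a, b) ≠ (0, 0)) :
    Function.Injective fun x : ℝ × ℝ => toLex (a * x.1 + b * x.2, -b * x.1 + a * x.2) := by
  intro x y h
  simp only [toLex_inj, Prod.mk.injEq] at h
  have hpos : a ^ 2 + b ^ 2 ≠ 0 := fun h0 => hab (by
    have ha : a = 0 := by nlinarith [sq_nonneg a, sq_nonneg b]
    have hb : b = 0 := by nlinarith [sq_nonneg a, sq_nonneg b]
    simp [ha, hb])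
  exact Prod.ext
    (mul_left_cancel₀ hpos (by linear_combination a * h.1 - b * h.2))
    (mul_left_cancel₀ hpos (by linear_combination b * h.1 + a * h.2))

section

variable {E : Type*} [AddCommGroup E] [Module ℝ E]

theorem exists_radon_partition_fin_four (hE : finrank ℝ E = 2) (f : Fin 4 → E) :
    ∃ S : Finset (Fin 4), ((∃ j, S = {j}) ∨ ∃ j ≠ 0, S = {0, j}) ∧
      (convexHull ℝ (f '' S) ∩ convexHull ℝ (f '' (↑S)ᶜ)).Nonempty := by
  have : FiniteDimensional ℝ E := Module.finite_of_finrank_pos (by omega)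
  have hdep : ¬ AffineIndependent ℝ f := fun hind => by
    have h1 := hind.card_le_finrank_succ
    have h2 := Submodule.finrank_le (vectorSpan ℝ (Set.range f))
    simp only [Fintype.card_fin] at h1
    omega
  obtain ⟨I, hI⟩ := Convex.radon_partition hdep
  lift I to Finset (Fin 4) using I.toFinite
  have hI' : (convexHull ℝ (f '' ↑Iᶜ) ∩ convexHull ℝ (f '' (↑Iᶜ)ᶜ)).Nonempty := by
    rwa [coe_compl, compl_compl, Set.inter_comm]
  obtain ⟨S, hS, hshape⟩ := (by decide : ∀ I : Finset (Fin 4), ∃ S ∈ ({I, Iᶜ} : Finset _),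
    S = ∅ ∨ (∃ j, S = {j}) ∨ ∃ j ≠ 0, S = {0, j}) I
  have hSne : (convexHull ℝ (f '' S) ∩ convexHull ℝ (f '' (↑S)ᶜ)).Nonempty := by
    rcases mem_insert.1 hS with rfl | hS
    · exact hI
    · rw [mem_singleton.1 hS]
      exact hI'
  refine ⟨S, hshape.resolve_left ?_, hSne⟩
  rintro rfl
  simp at hSne

def cutGraph (P : Finset E) : SimpleGraph E where
  Adj p q := p ≠ q ∧ p ∈ P ∧ q ∈ P ∧
    ∃ φ : E →ₗ[ℝ] ℝ, ∀ r ∈ P, r ≠ p → r ≠ q → φ p < φ r ∧ φ q < φ r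
  symm := ⟨fun _ _ ⟨hpq, hp, hq, φ, hφ⟩ =>
    ⟨hpq.symm, hq, hp, φ, fun r hr hrq hrp => (hφ r hr hrp hrq).symm⟩⟩
  loopless := ⟨fun _ h => h.1 rfl⟩

namespace cutGraph

variable {P : Finset E} {p q : E}

theorem adj_iff : (cutGraph P).Adj p q ↔ p ≠ q ∧ p ∈ P ∧ q ∈ P ∧
    ∃ φ : E →ₗ[ℝ] ℝ, ∀ r ∈ P, r ≠ p → r ≠ q → φ p < φ r ∧ φ q < φ r := Iff.rfl

theorem mem_of_adj (h : (cutGraph P).Adj p q) : p ∈ P := (adj_iff.1 h).2.1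

theorem disjoint_convexHull_of_adj (h : (cutGraph P).Adj p q) :
    Disjoint (convexHull ℝ {p, q}) (convexHull ℝ (↑P \ {p, q})) := by
  obtain ⟨-, -, -, φ, hφ⟩ := adj_iff.1 h
  set M := max (φ p) (φ q)
  have hle : convexHull ℝ {p, q} ⊆ {x | φ x ≤ M} :=
    convexHull_min (by simp [Set.insert_subset_iff, M]) (convex_halfSpace_le φ.isLinear M)
  have hgt : convexHull ℝ (↑P \ {p, q}) ⊆ {x | M < φ x} := by
    refine convexHull_min (fun r ⟨hr, hrpq⟩ => ?_) (convex_halfSpace_gt φ.isLinear M)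
    simp only [Set.mem_insert_iff, Set.mem_singleton_iff, not_or] at hrpq
    exact max_lt_iff.2 (hφ r hr hrpq.1 hrpq.2)
  exact Set.disjoint_left.2 fun x hx hx' => (show M < φ x from hgt hx').not_ge (hle hx)

theorem notMem_convexHull_of_adj (h : (cutGraph P).Adj p q) {S : Set E}
    (hS : S ⊆ ↑P \ {p, q}) : p ∉ convexHull ℝ S := fun hp =>
  Set.disjoint_left.1 (disjoint_convexHull_of_adj h) (subset_convexHull ℝ _ (by simp))
    (convexHull_mono hS hp)

theorem adj_of_forall_toLex_lt (φ ψ : E →ₗ[ℝ] ℝ) (hpq : p ≠ q) (hp : p ∈ P) (hq : q ∈ P)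
    (h : ∀ r ∈ P, r ≠ p → r ≠ q →
      toLex (φ p, ψ p) < toLex (φ r, ψ r) ∧ toLex (φ q, ψ q) < toLex (φ r, ψ r)) :
    (cutGraph P).Adj p q := by
  classical
  have hev : ∀ᶠ δ in 𝓝[>] (0 : ℝ), ∀ r ∈ (P.erase p).erase q,
      φ p + δ * ψ p < φ r + δ * ψ r ∧ φ q + δ * ψ q < φ r + δ * ψ r := by
    refine (eventually_all_finset _).2 fun r hr => ?_
    obtain ⟨hrq, hrp, hrP⟩ : r ≠ q ∧ r ≠ p ∧ r ∈ P := by simpa using hr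
    exact (eventually_add_mul_lt_of_toLex_lt (h r hrP hrp hrq).1).and
      (eventually_add_mul_lt_of_toLex_lt (h r hrP hrp hrq).2)
  obtain ⟨δ, hδ⟩ := hev.exists
  exact ⟨hpq, hp, hq, φ + δ • ψ, fun r hr hrp hrq => by simpa using hδ r (by simp [*])⟩

theorem exists_adj_of_injOn (φ ψ : E →ₗ[ℝ] ℝ) (hinj : Set.InjOn (fun x => toLex (φ x, ψ x)) P)
    {s₁ s₂ : E} (h₁ : s₁ ∈ P) (h₂ : s₂ ∈ P) (hne : s₁ ≠ s₂) {c : ℝ} (hc₁ : φ s₁ ≤ c)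
    (hc₂ : φ s₂ ≤ c) : ∃ p q, (cutGraph P).Adj p q ∧ φ p ≤ c ∧ φ q ≤ c := by
  classical
  set e := fun x => toLex (φ x, ψ x)
  have hfst : ∀ {x y}, e x ≤ e y → φ x ≤ φ y := fun h => Prod.Lex.monotone_fst _ _ h
  obtain ⟨p, hp, hpmin⟩ := P.exists_min_image e ⟨s₁, h₁⟩
  obtain ⟨t, ht, htc⟩ : ∃ t ∈ P.erase p, φ t ≤ c := by
    rcases eq_or_ne s₁ p with rfl | h
    · exact ⟨s₂, mem_erase.2 ⟨hne.symm, h₂⟩, hc₂⟩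
    · exact ⟨s₁, mem_erase.2 ⟨h, h₁⟩, hc₁⟩
  obtain ⟨q, hq, hqmin⟩ := (P.erase p).exists_min_image e ⟨t, ht⟩
  obtain ⟨hqp, hqP⟩ := mem_erase.1 hq
  refine ⟨p, q, adj_of_forall_toLex_lt φ ψ hqp.symm hp hqP fun r hr hrp hrq => ⟨?_, ?_⟩,
    (hfst (hpmin s₁ h₁)).trans hc₁, (hfst (hqmin t ht)).trans htc⟩
  · exact (hpmin r hr).lt_of_ne fun h => hrp (hinj hr hp h.symm)
  · exact (hqmin r (mem_erase.2 ⟨hrp, hr⟩)).lt_of_ne fun h => hrq (hinj hr hqP h.symm)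

variable [DecidableEq E]

theorem eq_or_eq_or_eq_of_adj_extreme (hE : finrank ℝ E = 2) {v x y z : E}
    (hv : v ∉ convexHull ℝ ↑(P.erase v)) (hx : x ∉ convexHull ℝ ↑(P.erase x))
    (hy : y ∉ convexHull ℝ ↑(P.erase y)) (hz : z ∉ convexHull ℝ ↑(P.erase z))
    (hvx : (cutGraph P).Adj v x) (hvy : (cutGraph P).Adj v y) (hvz : (cutGraph P).Adj v z) :
    x = y ∨ x = z ∨ y = z := by
  by_contra! hxyz
  obtain ⟨hxy, hxz, hyz⟩ := hxyz
  set f := ![v, x, y, z]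
  have hf : Function.Injective f := by
    intro i j hij
    fin_cases i <;> fin_cases j <;> simp_all [f, eq_comm, hvx.ne, hvy.ne, hvz.ne]
  have hsub : ∀ S : Set (Fin 4), f '' Sᶜ ⊆ ↑P \ f '' S := by
    refine fun S => Set.subset_sdiff.2 ⟨Set.image_subset_iff.2 fun i _ => ?_,
      Set.subset_compl_iff_disjoint_right.1 (Set.image_compl_subset hf)⟩
    fin_cases i
    exacts [mem_of_adj hvx, mem_of_adj hvx.symm, mem_of_adj hvy.symm, mem_of_adj hvz.symm]
  obtain ⟨S, ⟨j, rfl⟩ | ⟨j, hj, rfl⟩, m, hm, hm'⟩ := exists_radon_partition_fin_four hE f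
  · rw [coe_singleton, Set.image_singleton, convexHull_singleton] at hm
    obtain rfl : m = f j := hm
    have hext : f j ∉ convexHull ℝ ↑(P.erase (f j)) := by
      fin_cases j
      exacts [hv, hx, hy, hz]
    refine hext (convexHull_mono ?_ hm')
    rw [coe_singleton, coe_erase, ← Set.image_singleton]
    exact hsub {j}
  · have hadj : (cutGraph P).Adj v (f j) := by
      fin_cases j <;> simp_all [f]
    rw [coe_pair, Set.image_pair] at hm
    refine Set.disjoint_left.1 (disjoint_convexHull_of_adj hadj) hm (convexHull_mono ?_ hm')
    simpa [Set.image_pair, f] using hsub {0, j}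

end cutGraph

end

namespace cutGraph

variable {E : Type*} [NormedAddCommGroup E] [NormedSpace ℝ E] [DecidableEq E] {P : Finset E}
  {q : E}

theorem eq_insert_and_mem_interior_of_forall_adj [FiniteDimensional ℝ E] {t : Finset E}
    (hti : AffineIndependent ℝ ((↑) : t → E)) (hcard : Fintype.card t = finrank ℝ E + 1)
    (htP : (↑t : Set E) ⊆ ↑P \ {q}) (hqt : q ∈ convexHull ℝ ↑t)
    (hadj : ∀ w ∈ t, (cutGraph P).Adj q w) :
    P = insert q t ∧ q ∈ interior (convexHull ℝ ↑t) := by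
  let B : AffineBasis t ℝ E :=
    ⟨(↑), hti, hti.affineSpan_eq_top_iff_card_eq_finrank_add_one.2 hcard⟩
  have hrange : Set.range B = ↑t := Subtype.range_coe
  have hqB : q ∈ convexHull ℝ (Set.range B) := hrange ▸ hqt
  have hB : ∀ i : t, B '' {i}ᶜ ⊆ ↑P \ {q, ↑i} := by
    rintro i _ ⟨j, hji, rfl⟩
    obtain ⟨hjP, hjq⟩ : (j : E) ∈ P ∧ (j : E) ≠ q := by simpa using htP j.2
    show (j : E) ∈ (↑P : Set E) \ {q, (i : E)}
    simp [hjP, hjq, Subtype.coe_ne_coe.2 hji]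
  have hnot : ∀ i : t, ∀ S ⊆ ↑P \ {q, ↑i}, q ∉ convexHull ℝ S := fun i _ =>
    notMem_convexHull_of_adj (hadj i i.2)
  have hpos : ∀ i, 0 < B.coord i q := by
    have hnonneg : ∀ i, 0 ≤ B.coord i q := by simpa [B.convexHull_eq_nonneg_coord] using hqB
    exact fun i => (hnonneg i).lt_of_ne' fun h0 =>
      hnot i _ (hB i) (B.mem_convexHull_image_compl_of_coord_eq_zero hqB h0)
  have : Nonempty t := Fintype.card_pos_iff.1 (by omega)
  have hqP : q ∈ P := mem_of_adj (hadj _ (Classical.arbitrary t).2)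
  have hinsert : insert q t ⊆ P := insert_subset hqP fun u hu => by simpa using (htP hu).1
  refine ⟨(hinsert.eq_or_ssubset.resolve_right fun hPt => ?_).symm,
    by rwa [← hrange, B.interior_convexHull]⟩
  obtain ⟨r, hrP, hr⟩ := exists_of_ssubset hPt
  obtain ⟨hrq, hrt⟩ : r ≠ q ∧ r ∉ t := by simpa using hr
  obtain ⟨i, hi⟩ := B.exists_mem_convexHull_insert_image_compl hpos r
  refine hnot i _ (Set.insert_subset ?_ (hB i)) hi
  have hri : r ≠ i := fun h => hrt (h ▸ i.2)
  simp [hrP, hrq, hri]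

theorem card_adj_le_two_of_mem_convexHull [DecidableRel (cutGraph P).Adj]
    (hE : finrank ℝ E = 2) (hq : q ∈ convexHull ℝ ↑(P.erase q))
    (hexc : ¬ (#P = 4 ∧ q ∈ interior (convexHull ℝ ↑(P.erase q)))) :
    #{w ∈ P | (cutGraph P).Adj q w} ≤ 2 := by
  have : FiniteDimensional ℝ E := Module.finite_of_finrank_pos (by omega)
  by_contra! hN
  set N := {w ∈ P | (cutGraph P).Adj q w}
  rw [convexHull_eq_union] at hq
  obtain ⟨t, hti, htP, hqt⟩ : ∃ t : Finset E, AffineIndependent ℝ ((↑) : t → E) ∧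
      (↑t : Set E) ⊆ ↑P \ {q} ∧ q ∈ convexHull ℝ ↑t := by simpa using hq
  have hNt : N ⊆ t := fun w hw => by
    by_contra hwt
    refine notMem_convexHull_of_adj (mem_filter.1 hw).2 (fun u hu => ?_) hqt
    obtain ⟨huP, huq⟩ : u ∈ P ∧ u ≠ q := by simpa using htP hu
    simp [huP, huq, ne_of_mem_of_not_mem hu hwt]
  have hcard : Fintype.card t = finrank ℝ E + 1 := by
    have h1 := hti.card_le_finrank_succ
    have h2 := Submodule.finrank_le (vectorSpan ℝ (Set.range ((↑) : t → E)))
    have h3 := card_le_card hNt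
    simp only [Fintype.card_coe] at h1 ⊢
    omega
  have hNt_eq : N = t := eq_of_subset_of_card_le hNt (by simp at hcard; omega)
  obtain ⟨hPt, hint⟩ := eq_insert_and_mem_interior_of_forall_adj hti hcard htP hqt
    fun w hw => (mem_filter.1 (hNt_eq ▸ hw)).2
  have hqt' : q ∉ t := fun h => by simpa using htP h
  exact hexc ⟨by rw [hPt, card_insert_of_notMem hqt', ← Fintype.card_coe, hcard, hE],
    by rwa [hPt, erase_insert hqt']⟩

theorem colorable_three (hE : finrank ℝ E = 2)
    (hexc : ¬ (#P = 4 ∧ ∃ p ∈ P, p ∈ interior (convexHull ℝ ↑(P.erase p)))) :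
    (cutGraph P).Colorable 3 := by
  classical
  refine (cutGraph P).colorable_of_forall_exists_card_adj_le P (fun _ _ h => mem_of_adj h) 2
    fun T hTP hT => ?_
  by_cases h : ∃ q ∈ T, q ∈ convexHull ℝ ↑(P.erase q)
  · obtain ⟨q, hqT, hq⟩ := h
    exact ⟨q, hqT, (card_le_card (filter_subset_filter _ hTP)).trans
      (card_adj_le_two_of_mem_convexHull hE hq fun h' => hexc ⟨h'.1, q, hTP hqT, h'.2⟩)⟩
  · push Not at h
    obtain ⟨v, hv⟩ := hT
    refine ⟨v, hv, ?_⟩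
    by_contra! h3
    obtain ⟨x, hx, y, hy, z, hz, hxy, hxz, hyz⟩ := two_lt_card.1 h3
    simp only [mem_filter] at hx hy hz
    rcases eq_or_eq_or_eq_of_adj_extreme hE (h v hv) (h x hx.1) (h y hy.1) (h z hz.1)
      hx.2 hy.2 hz.2 with h | h | h <;> contradiction

end cutGraph

theorem stmt9_general (P : Finset (ℝ × ℝ))
    (hexc : ¬ (P.card = 4 ∧ ∃ p ∈ P,
      p ∈ interior (convexHull ℝ (↑(P.erase p) : Set (ℝ × ℝ))))) :
    ∃ f : ℝ × ℝ → Fin 3, ∀ a b c : ℝ, (a, b) ≠ ((0 : ℝ), (0 : ℝ)) →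
      2 ≤ (halfPlane a b c ∩ ↑P).ncard →
      ∃ p ∈ P, ∃ q ∈ P, p ∈ halfPlane a b c ∧ q ∈ halfPlane a b c ∧ f p ≠ f q := by
  obtain ⟨C⟩ := cutGraph.colorable_three (by simp) hexc
  refine ⟨C, fun a b c hab hcard => ?_⟩
  obtain ⟨s₁, s₂, hs₁, hs₂, hne⟩ :=
    (Set.one_lt_ncard_iff (P.finite_toSet.subset Set.inter_subset_right)).1 hcard
  let φ := a • LinearMap.fst ℝ ℝ ℝ + b • LinearMap.snd ℝ ℝ ℝ
  let ψ := -b • LinearMap.fst ℝ ℝ ℝ + a • LinearMap.snd ℝ ℝ ℝ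
  obtain ⟨p, q, hpq, hp, hq⟩ := cutGraph.exists_adj_of_injOn φ ψ
    (fun x _ y _ h => injective_toLex_rotate hab (by simpa [φ, ψ] using h))
    hs₁.2 hs₂.2 hne (by simpa [φ, halfPlane] using hs₁.1)
    (by simpa [φ, halfPlane] using hs₂.1)
  exact ⟨p, cutGraph.mem_of_adj hpq, q, cutGraph.mem_of_adj hpq.symm,
    by simpa [φ, halfPlane] using hp, by simpa [φ, halfPlane] using hq, C.valid hpq⟩

theorem stmt9 (P : Finset (ℝ × ℝ)) (hP : GenPos P)
    (hexc : ¬ (P.card = 4 ∧ ∃ p ∈ P,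
      p ∈ interior (convexHull ℝ (↑(P.erase p) : Set (ℝ × ℝ))))) :
    ∃ f : ℝ × ℝ → Fin 3, ∀ a b c : ℝ, (a, b) ≠ ((0 : ℝ), (0 : ℝ)) →
      2 ≤ (halfPlane a b c ∩ ↑P).ncard →
      ∃ p ∈ P, ∃ q ∈ P, p ∈ halfPlane a b c ∧ q ∈ halfPlane a b c ∧ f p ≠ f q :=
  stmt9_general P hexc
end

section
/- Any finite set of points in the plane in general position (no 3 collinear) can be colored with 2 colors such that every half-plane containing at least 3 of the points contains two points of different colors. -/
/-!
Colour a point red if it is a vertex of the convex hull of `P` outside `B`, and blue otherwise,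
where `B` is a maximal independent set, in the cycle of hull vertices, of ears: hull vertices
whose triangle with their two hull neighbours contains no other point of `P`.

After a small rotation of its boundary, a half-plane containing at least three points of `P`
contains the three lowest points `s₁, s₂, s₃` of `P` for a linear functional `μ` injective on
`P`. The lowest point `s₁` is a hull vertex, and every other hull vertex has a lower hull
neighbour, since `P` lies in the cone spanned by the two hull edges at a vertex. Hence the hull
vertices among `s₁, s₂, s₃` form a path of the hull cycle. Red point: two adjacent hull vertices
are not both in `B`, and if `s₁` is the only hull vertex of the three, its hull neighbours lie
above `s₃`, so `s₂` lies in the triangle at `s₁` and `s₁` is not an ear. Blue point: if all three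
are hull vertices, the middle vertex of the path is an ear, so it or a neighbour is in `B`.
-/

theorem mem_convexHull_setOf_eq_of_forall_le {E : Type*} [AddCommGroup E] [Module ℝ E]
    (f : E →ₗ[ℝ] ℝ) {s : Set E} {x : E} (hx : x ∈ convexHull ℝ s) (hs : ∀ y ∈ s, f x ≤ f y) :
    x ∈ convexHull ℝ {y ∈ s | f y = f x} := by
  set face := {y ∈ s | f y = f x}
  set rest := {y ∈ s | f x < f y}
  have hsplit : s = face ∪ rest := by
    ext y
    refine ⟨fun hy => ?_, fun hy => hy.elim And.left And.left⟩
    rcases (hs y hy).eq_or_lt with h | h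
    exacts [Or.inl ⟨hy, h.symm⟩, Or.inr ⟨hy, h⟩]
  have hullFace : convexHull ℝ face ⊆ {y | f y = f x} :=
    convexHull_min (fun y hy => hy.2) (convex_hyperplane f.isLinear _)
  have hullRest : convexHull ℝ rest ⊆ {y | f x < f y} :=
    convexHull_min (fun y hy => hy.2) (convex_halfSpace_gt f.isLinear _)
  rcases rest.eq_empty_or_nonempty with hr | hr
  · rwa [hsplit, hr, Set.union_empty] at hx
  rcases face.eq_empty_or_nonempty with hf | hf
  · rw [hsplit, hf, Set.empty_union] at hx
    exact absurd (hullRest hx) (lt_irrefl (f x))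
  rw [hsplit, convexHull_union hf hr] at hx
  obtain ⟨a, ha, b, hb, θa, θb, -, -, hθ, hxab⟩ := mem_convexJoin.1 hx
  have hfa : f a = f x := hullFace ha
  have hfb : f x < f b := hullRest hb
  have hθb : θb = 0 := by
    have hfx : f x = θa * f a + θb * f b := by rw [← hxab]; simp
    have key : θb * (f b - f x) = 0 := by linear_combination -hfx - θa * hfa - f x * hθ
    exact (mul_eq_zero.1 key).resolve_right (sub_pos.2 hfb).ne'
  rw [hθb, zero_smul, add_zero, (by linarith : θa = 1), one_smul] at hxab
  exact hxab ▸ ha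

theorem Finset.notMem_convexHull_erase {E : Type*} [AddCommGroup E] [Module ℝ E]
    [DecidableEq E] {P : Finset E} {x z : E} (f : E →ₗ[ℝ] ℝ) (hle : ∀ y ∈ P, f x ≤ f y)
    (heq : ∀ y ∈ P, y ≠ x → f y = f x → y = z) : x ∉ convexHull ℝ ↑(P.erase x) := by
  intro hx
  have hface := mem_convexHull_setOf_eq_of_forall_le f hx fun y hy =>
    hle y (Finset.mem_of_mem_erase hy)
  have hsub : {y ∈ (↑(P.erase x) : Set E) | f y = f x} ⊆ {z} := fun y ⟨hy, hfy⟩ =>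
    heq y (Finset.mem_of_mem_erase hy) (Finset.ne_of_mem_erase hy) hfy
  have hxz : x = z := by simpa using convexHull_mono hsub hface
  have hempty : {y ∈ (↑(P.erase x) : Set E) | f y = f x} = ∅ :=
    Set.eq_empty_of_forall_notMem fun y hy => Finset.ne_of_mem_erase hy.1 (hxz ▸ hsub hy)
  rw [hempty, convexHull_empty] at hface
  exact hface

theorem Finset.exists_forall_rel {α : Type*} {r : α → α → Prop} {s : Finset α} (hs : s.Nonempty)
    (htotal : ∀ x ∈ s, ∀ y ∈ s, x ≠ y → r x y ∨ r y x)
    (htrans : ∀ x ∈ s, ∀ y ∈ s, ∀ z ∈ s, r x y → r y z → r x z) :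
    ∃ m ∈ s, ∀ x ∈ s, x ≠ m → r m x := by
  induction hs using Finset.Nonempty.cons_induction with
  | singleton a => exact ⟨a, by simp, fun x hx hxa => absurd (by simpa using hx) hxa⟩
  | cons a s ha hs ih =>
    have sub : s ⊆ Finset.cons a s ha := Finset.subset_cons ha
    obtain ⟨m, hm, hmin⟩ := ih (fun x hx y hy => htotal x (sub hx) y (sub hy))
      (fun x hx y hy z hz => htrans x (sub hx) y (sub hy) z (sub hz))
    have ham : a ≠ m := fun h => ha (h ▸ hm)
    have haa := Finset.mem_cons_self (h := ha)
    rcases htotal a haa m (sub hm) ham with h | h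
    · refine ⟨a, haa, fun x hx hxa => ?_⟩
      rcases Finset.mem_cons.1 hx with rfl | hx
      · exact absurd rfl hxa
      by_cases hxm : x = m
      · exact hxm ▸ h
      · exact htrans a haa m (sub hm) x (sub hx) h (hmin x hx hxm)
    · refine ⟨m, sub hm, fun x hx hxm => ?_⟩
      rcases Finset.mem_cons.1 hx with rfl | hx
      exacts [h, hmin x hx hxm]

theorem Finset.exists_forall_lt_of_injOn {α : Type*} {S : Finset α} {f : α → ℝ}
    (hS : S.Nonempty) (hf : Set.InjOn f S) : ∃ m ∈ S, ∀ x ∈ S, x ≠ m → f m < f x :=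
  Finset.exists_forall_rel (r := (f · < f ·)) hS
    (fun _ hx _ hy hxy => lt_or_gt_of_ne fun h => hxy (hf hx hy h))
    (fun _ _ _ _ _ _ => lt_trans)

theorem SimpleGraph.exists_isIndepSet_forall_exists_adj {α : Type*} (G : SimpleGraph α)
    (s : Finset α) : ∃ t ⊆ s, G.IsIndepSet ↑t ∧ ∀ v ∈ s, v ∉ t → ∃ b ∈ t, G.Adj v b := by
  classical
  obtain ⟨t, ht⟩ := Finset.exists_maximal
    (s := s.powerset.filter fun t : Finset α => G.IsIndepSet (t : Set α)) ⟨∅, by simp⟩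
  simp only [Finset.mem_filter, Finset.mem_powerset] at ht
  obtain ⟨⟨hts, hind⟩, hmax⟩ := ht
  refine ⟨t, hts, hind, fun v hv hvt => ?_⟩
  by_contra! hnadj
  have hins : G.IsIndepSet ↑(insert v t) := by
    rw [Finset.coe_insert]
    exact hind.insert fun b hb _ => ⟨hnadj b hb, fun h => hnadj b hb h.symm⟩
  exact hvt (hmax ⟨Finset.insert_subset hv hts, hins⟩ (Finset.subset_insert v t)
    (Finset.mem_insert_self v t))

open Filter Topology in
theorem exists_linearMap_injOn_of_lt_imp_lt {E : Type*} [AddCommGroup E] [Module ℝ E]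
    (P : Finset E) (ℓ ℓ' : E →ₗ[ℝ] ℝ) (hinj : ∀ x y, ℓ x = ℓ y → ℓ' x = ℓ' y → x = y) :
    ∃ μ : E →ₗ[ℝ] ℝ, Set.InjOn μ P ∧ ∀ p ∈ P, ∀ q ∈ P, ℓ p < ℓ q → μ p < μ q := by
  have hsmall : ∀ᶠ t in 𝓝[>] (0 : ℝ), ∀ p ∈ P, ∀ q ∈ P,
      ℓ p < ℓ q → ℓ p + t * ℓ' p < ℓ q + t * ℓ' q := by
    simp only [eventually_all_finset]
    intro p _ q _
    by_cases hpq : ℓ p < ℓ q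
    · refine nhdsWithin_le_nhds ((ContinuousAt.eventually_lt ?_ ?_ ?_).mono fun _ h _ => h)
      · fun_prop
      · fun_prop
      · simpa using hpq
    · exact .of_forall fun _ h => absurd h hpq
  obtain ⟨t, ht, htpos⟩ := (hsmall.and self_mem_nhdsWithin).exists
  refine ⟨ℓ + t • ℓ', fun p hp q hq hμ => ?_, fun p hp q hq h => by simpa using ht p hp q hq h⟩
  simp only [LinearMap.add_apply, LinearMap.smul_apply, smul_eq_mul] at hμ
  rcases lt_trichotomy (ℓ p) (ℓ q) with h | h | h
  · exact absurd hμ (ht p hp q hq h).ne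
  · refine hinj p q h (mul_left_cancel₀ (ne_of_gt htpos) ?_)
    linarith
  · exact absurd hμ (ht q hq p hp h).ne'

structure IsLowestThree {α : Type*} (S : Finset α) (f : α → ℝ) (s₁ s₂ s₃ : α) : Prop where
  mem₁ : s₁ ∈ S
  mem₂ : s₂ ∈ S
  mem₃ : s₃ ∈ S
  lt₁₂ : f s₁ < f s₂
  lt₂₃ : f s₂ < f s₃
  lt_of_ne : ∀ x ∈ S, x ≠ s₁ → x ≠ s₂ → x ≠ s₃ → f s₃ < f x

namespace IsLowestThree

variable {α : Type*} {S : Finset α} {f : α → ℝ} {s₁ s₂ s₃ y : α}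

theorem eq_or_eq_or_eq_of_le (hs : IsLowestThree S f s₁ s₂ s₃) (hy : y ∈ S) (hle : f y ≤ f s₃) :
    y = s₁ ∨ y = s₂ ∨ y = s₃ := by
  by_contra! h
  exact (hs.lt_of_ne y hy h.1 h.2.1 h.2.2).not_ge hle

theorem lt_of_ne_fst (hs : IsLowestThree S f s₁ s₂ s₃) (hy : y ∈ S) (hy₁ : y ≠ s₁) :
    f s₁ < f y := by
  by_cases hy₂ : y = s₂; · exact hy₂ ▸ hs.lt₁₂
  by_cases hy₃ : y = s₃; · exact hy₃ ▸ hs.lt₁₂.trans hs.lt₂₃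
  exact hs.lt₁₂.trans (hs.lt₂₃.trans (hs.lt_of_ne y hy hy₁ hy₂ hy₃))

end IsLowestThree

theorem exists_isLowestThree {α : Type*} [DecidableEq α] {S : Finset α} {f : α → ℝ}
    (hS : 3 ≤ S.card) (hf : Set.InjOn f S) : ∃ s₁ s₂ s₃, IsLowestThree S f s₁ s₂ s₃ := by
  obtain ⟨s₁, h₁, hmin₁⟩ :=
    Finset.exists_forall_lt_of_injOn (S := S) (Finset.card_pos.1 (by omega)) hf
  set S₂ := S.erase s₁
  have hS₂ : 2 ≤ S₂.card := by rw [Finset.card_erase_of_mem h₁]; omega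
  obtain ⟨s₂, h₂, hmin₂⟩ := Finset.exists_forall_lt_of_injOn (S := S₂)
    (Finset.card_pos.1 (by omega)) (hf.mono (Finset.coe_subset.2 (Finset.erase_subset s₁ S)))
  set S₃ := S₂.erase s₂
  have hS₃ : 1 ≤ S₃.card := by rw [Finset.card_erase_of_mem h₂]; omega
  obtain ⟨s₃, h₃, hmin₃⟩ := Finset.exists_forall_lt_of_injOn (S := S₃)
    (Finset.card_pos.1 (by omega))
    (hf.mono (Finset.coe_subset.2 ((Finset.erase_subset s₂ S₂).trans (Finset.erase_subset s₁ S))))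
  obtain ⟨h₃₂, h₃₁, h₃⟩ : s₃ ≠ s₂ ∧ s₃ ≠ s₁ ∧ s₃ ∈ S := by simpa [S₃, S₂] using h₃
  obtain ⟨h₂₁, h₂⟩ : s₂ ≠ s₁ ∧ s₂ ∈ S := by simpa [S₂] using h₂
  refine ⟨s₁, s₂, s₃, h₁, h₂, h₃, hmin₁ s₂ h₂ h₂₁, hmin₂ s₃ (Finset.mem_erase.2 ⟨h₃₁, h₃⟩) h₃₂,
    fun x hx hx₁ hx₂ hx₃ => hmin₃ x (Finset.mem_erase.2 ⟨hx₂, Finset.mem_erase.2 ⟨hx₁, hx⟩⟩) hx₃⟩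

theorem fst_sq_add_snd_sq_pos {d : ℝ × ℝ} (hd : d ≠ 0) : 0 < d.1 ^ 2 + d.2 ^ 2 := by
  by_contra! h
  have h₁ : d.1 = 0 := by nlinarith [sq_nonneg d.1, sq_nonneg d.2]
  have h₂ : d.2 = 0 := by nlinarith [sq_nonneg d.1, sq_nonneg d.2]
  exact hd (Prod.ext h₁ h₂)

theorem exists_isLowestThree_subset_halfPlane (P : Finset (ℝ × ℝ)) {a b c : ℝ}
    (hab : (a, b) ≠ ((0 : ℝ), (0 : ℝ))) (hn : 3 ≤ (halfPlane a b c ∩ ↑P).ncard) :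
    ∃ (μ : ℝ × ℝ →ₗ[ℝ] ℝ) (s₁ s₂ s₃ : ℝ × ℝ), IsLowestThree P μ s₁ s₂ s₃ ∧
      s₁ ∈ halfPlane a b c ∧ s₂ ∈ halfPlane a b c ∧ s₃ ∈ halfPlane a b c := by
  classical
  set ℓ : ℝ × ℝ →ₗ[ℝ] ℝ := a • LinearMap.fst ℝ ℝ ℝ + b • LinearMap.snd ℝ ℝ ℝ
  set ℓ' : ℝ × ℝ →ₗ[ℝ] ℝ := (-b) • LinearMap.fst ℝ ℝ ℝ + a • LinearMap.snd ℝ ℝ ℝ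
  have hℓ : ∀ x, x ∈ halfPlane a b c ↔ ℓ x ≤ c := fun x => by simp [ℓ, halfPlane]
  have hK : 0 < a ^ 2 + b ^ 2 := fst_sq_add_snd_sq_pos hab
  obtain ⟨μ, hμ, hmono⟩ := exists_linearMap_injOn_of_lt_imp_lt P ℓ ℓ' fun x y h h' => by
    simp only [ℓ, ℓ', LinearMap.add_apply, LinearMap.smul_apply, LinearMap.fst_apply,
      LinearMap.snd_apply, smul_eq_mul] at h h'
    exact Prod.ext (mul_left_cancel₀ hK.ne' (by linear_combination a * h - b * h'))
      (mul_left_cancel₀ hK.ne' (by linear_combination b * h + a * h'))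
  set T := P.filter (· ∈ halfPlane a b c)
  have hT : 3 ≤ T.card := by
    rw [← Set.ncard_coe_finset]
    convert hn using 2
    ext x
    simp [T, and_comm]
  obtain ⟨s₁, s₂, s₃, hs⟩ := exists_isLowestThree hT
    (hμ.mono (Finset.coe_subset.2 (Finset.filter_subset _ P)))
  obtain ⟨h₁, h₁'⟩ := Finset.mem_filter.1 hs.mem₁
  obtain ⟨h₂, h₂'⟩ := Finset.mem_filter.1 hs.mem₂
  obtain ⟨h₃, h₃'⟩ := Finset.mem_filter.1 hs.mem₃
  refine ⟨μ, s₁, s₂, s₃, ⟨h₁, h₂, h₃, hs.lt₁₂, hs.lt₂₃, fun x hx hx₁ hx₂ hx₃ => ?_⟩, h₁', h₂', h₃'⟩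
  by_cases hxT : x ∈ halfPlane a b c
  · exact hs.lt_of_ne x (Finset.mem_filter.2 ⟨hx, hxT⟩) hx₁ hx₂ hx₃
  · rw [hℓ] at hxT h₃'
    exact hmono s₃ h₃ x hx (by linarith)

namespace Plane

def cross (u v : ℝ × ℝ) : ℝ := u.1 * v.2 - u.2 * v.1

def crossₗ (u : ℝ × ℝ) : ℝ × ℝ →ₗ[ℝ] ℝ := u.1 • LinearMap.snd ℝ ℝ ℝ - u.2 • LinearMap.fst ℝ ℝ ℝ

@[simp]
theorem crossₗ_apply (u v : ℝ × ℝ) : crossₗ u v = cross u v := by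
  simp [crossₗ, cross]

@[simp]
theorem cross_self (a : ℝ × ℝ) : cross a a = 0 := by
  simp [cross, mul_comm]

theorem crossₗ_sub_crossₗ (a x y : ℝ × ℝ) : crossₗ a y - crossₗ a x = cross a (y - x) := by
  simp only [crossₗ_apply, cross, Prod.fst_sub, Prod.snd_sub]
  ring

theorem cross_smul_eq_add (a b c : ℝ × ℝ) : cross a c • b = cross b c • a + cross a b • c := by
  ext <;> simp [cross] <;> ring

theorem cross_mul_eq_add (μ : ℝ × ℝ →ₗ[ℝ] ℝ) (a b c : ℝ × ℝ) :
    cross a c * μ b = cross b c * μ a + cross a b * μ c := by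
  simpa using congrArg μ (cross_smul_eq_add a b c)

/-- The coefficients are the barycentric coordinates of `y` in the triangle `v u w`, scaled by
`cross (u - v) (w - v)`. -/
theorem cross_mul_sub_eq (μ : ℝ × ℝ →ₗ[ℝ] ℝ) (v u w y : ℝ × ℝ) (c : ℝ) :
    cross (u - v) (w - v) * (μ y - c) = cross (y - v) (w - v) * (μ u - c) +
      cross (u - v) (y - v) * (μ w - c) + cross (w - u) (y - u) * (μ v - c) := by
  have h := cross_mul_eq_add μ (u - v) (y - v) (w - v)
  simp only [map_sub, cross, Prod.fst_sub, Prod.snd_sub] at h ⊢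
  linear_combination h

theorem cross_ne_zero_of_genPos {P : Finset (ℝ × ℝ)} (hP : GenPos P) {p q r : ℝ × ℝ}
    (hp : p ∈ P) (hq : q ∈ P) (hr : r ∈ P) (hpq : p ≠ q) (hpr : p ≠ r) (hqr : q ≠ r) :
    cross (q - p) (r - p) ≠ 0 := by
  intro h
  apply hP p hp q hq r hr hpq hpr hqr
  have hK := fst_sq_add_snd_sq_pos (sub_ne_zero.2 hpq.symm)
  set t := ((q - p).1 * (r - p).1 + (q - p).2 * (r - p).2) / ((q - p).1 ^ 2 + (q - p).2 ^ 2)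
  have hline : AffineMap.lineMap p q t = r := by
    simp only [cross, Prod.fst_sub, Prod.snd_sub] at h hK
    ext <;> simp only [t, AffineMap.lineMap_apply, vsub_eq_sub, vadd_eq_add, Prod.fst_add,
      Prod.snd_add, Prod.fst_sub, Prod.snd_sub, Prod.smul_fst, Prod.smul_snd, smul_eq_mul] <;>
      field_simp
    · linear_combination (q.2 - p.2) * h
    · linear_combination (p.1 - q.1) * h
  have := collinear_insert_of_mem_affineSpan_pair
    (hline ▸ AffineMap.lineMap_mem_affineSpan_pair t p q)
  rwa [Set.insert_comm, Set.pair_comm] at this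

/-- `v → u` is an edge of the convex hull of `P`, traversed counterclockwise: every other point
of `P` lies strictly to its left. -/
structure IsHullEdge (P : Finset (ℝ × ℝ)) (v u : ℝ × ℝ) : Prop where
  left_mem : v ∈ P
  right_mem : u ∈ P
  ne : v ≠ u
  cross_pos : ∀ x ∈ P, x ≠ v → x ≠ u → 0 < cross (u - v) (x - v)

def hullGraph (P : Finset (ℝ × ℝ)) : SimpleGraph (ℝ × ℝ) := SimpleGraph.fromRel (IsHullEdge P)

def IsHullVertex (P : Finset (ℝ × ℝ)) (v : ℝ × ℝ) : Prop :=
  v ∈ P ∧ v ∉ convexHull ℝ (↑(P.erase v) : Set (ℝ × ℝ))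

/-- No point of `P` other than `v` lies strictly on `v`'s side of the chord `w u`: the triangle
`w v u` contains no further point of `P`. -/
def IsEar (P : Finset (ℝ × ℝ)) (v : ℝ × ℝ) : Prop :=
  ∃ w u, IsHullEdge P w v ∧ IsHullEdge P v u ∧ ∀ x ∈ P, x ≠ v → cross (w - u) (x - u) ≤ 0

variable {P : Finset (ℝ × ℝ)} {v u w x y z : ℝ × ℝ}

theorem IsEar.mem (h : IsEar P v) : v ∈ P :=
  let ⟨_, _, hwv, _⟩ := h
  hwv.right_mem

theorem IsHullEdge.cross_pos_left (h : IsHullEdge P w v) (hx : x ∈ P) (hxw : x ≠ w)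
    (hxv : x ≠ v) : 0 < cross (x - v) (w - v) := by
  have := h.cross_pos x hx hxw hxv
  simp only [cross, Prod.fst_sub, Prod.snd_sub] at this ⊢
  linarith

theorem IsHullEdge.cross_nonneg (h : IsHullEdge P v u) (hy : y ∈ P) :
    0 ≤ cross (u - v) (y - v) := by
  by_cases hyv : y = v; · simp [hyv, cross]
  by_cases hyu : y = u; · simp [hyu]
  exact (h.cross_pos y hy hyv hyu).le

theorem IsHullEdge.eq_or_eq_of_cross_eq_zero (h : IsHullEdge P v u) (hy : y ∈ P)
    (h0 : cross (u - v) (y - v) = 0) : y = v ∨ y = u := by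
  by_contra! hne
  exact (h.cross_pos y hy hne.1 hne.2).ne' h0

theorem IsHullEdge.right_unique (h : IsHullEdge P v u) (h' : IsHullEdge P v w) : u = w := by
  by_contra hne
  have h₁ := h.cross_pos w h'.right_mem h'.ne.symm (Ne.symm hne)
  have h₂ := h'.cross_pos u h.right_mem h.ne.symm hne
  simp only [cross] at h₁ h₂
  linarith

theorem IsHullEdge.left_unique (h : IsHullEdge P u v) (h' : IsHullEdge P w v) : u = w := by
  by_contra hne
  have h₁ := h.cross_pos_left h'.left_mem (Ne.symm hne) h'.ne
  have h₂ := h'.cross_pos_left h.left_mem hne h.ne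
  simp only [cross] at h₁ h₂
  linarith

theorem IsHullEdge.ne_of_isHullEdge (hwv : IsHullEdge P w v) (hvu : IsHullEdge P v u)
    (hy : y ∈ P) (hyv : y ≠ v) (hyu : y ≠ u) (hyw : y ≠ w) : w ≠ u := by
  rintro rfl
  have h₁ := hwv.cross_pos_left hy hyw hyv
  have h₂ := hvu.cross_pos y hy hyv hyw
  simp only [cross] at h₁ h₂
  linarith

theorem IsHullEdge.cross_pos_of_isHullEdge (hwv : IsHullEdge P w v) (hvu : IsHullEdge P v u)
    (hy : y ∈ P) (hyv : y ≠ v) (hyu : y ≠ u) (hyw : y ≠ w) :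
    0 < cross (u - v) (w - v) ∧ 0 < cross (y - v) (w - v) ∧ 0 < cross (u - v) (y - v) :=
  ⟨hvu.cross_pos w hwv.left_mem hwv.ne (hwv.ne_of_isHullEdge hvu hy hyv hyu hyw),
    hwv.cross_pos_left hy hyw hyv, hvu.cross_pos y hy hyv hyu⟩

theorem IsHullEdge.le_of_le (hwv : IsHullEdge P w v) (hvu : IsHullEdge P v u)
    (μ : ℝ × ℝ →ₗ[ℝ] ℝ) (hu : μ v ≤ μ u) (hw : μ v ≤ μ w) (hy : y ∈ P) : μ v ≤ μ y := by
  by_cases hyv : y = v; · rw [hyv]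
  by_cases hyu : y = u; · rwa [hyu]
  by_cases hyw : y = w; · rwa [hyw]
  obtain ⟨hD, hα, hβ⟩ := hwv.cross_pos_of_isHullEdge hvu hy hyv hyu hyw
  have := cross_mul_sub_eq μ v u w y (μ v)
  rw [sub_self, mul_zero, add_zero] at this
  nlinarith [mul_nonneg hα.le (sub_nonneg.2 hu), mul_nonneg hβ.le (sub_nonneg.2 hw)]

theorem IsHullEdge.lt_of_cross_nonpos (hwv : IsHullEdge P w v) (hvu : IsHullEdge P v u)
    (μ : ℝ × ℝ →ₗ[ℝ] ℝ) {c : ℝ} (hv : μ v ≤ c) (hu : c < μ u) (hw : c < μ w) (hy : y ∈ P)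
    (hyv : y ≠ v) (hyu : y ≠ u) (hyw : y ≠ w) (hear : cross (w - u) (y - u) ≤ 0) :
    c < μ y := by
  obtain ⟨hD, hα, hβ⟩ := hwv.cross_pos_of_isHullEdge hvu hy hyv hyu hyw
  have := cross_mul_sub_eq μ v u w y c
  nlinarith [mul_pos hα (sub_pos.2 hu), mul_pos hβ (sub_pos.2 hw),
    mul_nonneg_of_nonpos_of_nonpos hear (sub_nonpos.2 hv)]

theorem IsHullEdge.isEar (hwv : IsHullEdge P w v) (hvu : IsHullEdge P v u)
    (μ : ℝ × ℝ →ₗ[ℝ] ℝ) {c : ℝ} (hv : μ v ≤ c) (hu : μ u ≤ c) (hw : μ w ≤ c)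
    (hlow : ∀ y ∈ P, μ y ≤ c → y = v ∨ y = u ∨ y = w) : IsEar P v := by
  refine ⟨w, u, hwv, hvu, fun y hy hyv => ?_⟩
  by_cases hyu : y = u; · simp [hyu, cross]
  by_cases hyw : y = w; · simp [hyw]
  by_contra! hear
  obtain ⟨hD, hα, hβ⟩ := hwv.cross_pos_of_isHullEdge hvu hy hyv hyu hyw
  have := cross_mul_sub_eq μ v u w y c
  have hyc : μ y ≤ c := by
    nlinarith [mul_nonpos_of_nonneg_of_nonpos hα.le (sub_nonpos.2 hu),
      mul_nonpos_of_nonneg_of_nonpos hβ.le (sub_nonpos.2 hw),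
      mul_nonpos_of_nonneg_of_nonpos hear.le (sub_nonpos.2 hv)]
  rcases hlow y hy hyc with h | h | h <;> contradiction

theorem IsHullEdge.isHullVertex_left (h : IsHullEdge P v u) : IsHullVertex P v := by
  classical
  refine ⟨h.left_mem, Finset.notMem_convexHull_erase (crossₗ (u - v)) (z := u)
    (fun y hy => ?_) (fun y hy hyv hfy => ?_)⟩
  · linarith [crossₗ_sub_crossₗ (u - v) v y, h.cross_nonneg hy]
  · have := crossₗ_sub_crossₗ (u - v) v y
    exact (h.eq_or_eq_of_cross_eq_zero hy (by linarith)).resolve_left hyv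

theorem IsHullEdge.isHullVertex_right (h : IsHullEdge P v u) : IsHullVertex P u := by
  classical
  have hu : crossₗ (u - v) u = crossₗ (u - v) v := by
    linarith [crossₗ_sub_crossₗ (u - v) v u, cross_self (u - v)]
  refine ⟨h.right_mem, Finset.notMem_convexHull_erase (crossₗ (u - v)) (z := v)
    (fun y hy => ?_) (fun y hy hyu hfy => ?_)⟩
  · linarith [crossₗ_sub_crossₗ (u - v) v y, h.cross_nonneg hy]
  · have := crossₗ_sub_crossₗ (u - v) v y
    exact (h.eq_or_eq_of_cross_eq_zero hy (by linarith)).resolve_right hyu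

theorem isHullVertex_of_forall_lt (μ : ℝ × ℝ →ₗ[ℝ] ℝ) (hx : x ∈ P)
    (h : ∀ y ∈ P, y ≠ x → μ x < μ y) : IsHullVertex P x := by
  classical
  refine ⟨hx, Finset.notMem_convexHull_erase μ (z := x) (fun y hy => ?_)
    (fun y hy hyx hfy => absurd hfy (h y hy hyx).ne')⟩
  rcases eq_or_ne y x with rfl | hyx
  exacts [le_rfl, (h y hy hyx).le]

/-- The hull neighbours of `v` are the least and greatest elements of `P \ {v}` for the angular
order `0 < cross (x - v) (y - v)`, which is transitive there because `P \ {v}` lies in the open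
half-plane `ψ > ψ v`. -/
theorem exists_isHullEdge_of_forall_lt (hP : GenPos P) (ψ : ℝ × ℝ →ₗ[ℝ] ℝ) (hv : v ∈ P)
    (hψ : ∀ x ∈ P, x ≠ v → ψ v < ψ x) (hne : (P.erase v).Nonempty) :
    ∃ w u, IsHullEdge P w v ∧ IsHullEdge P v u := by
  have hmem : ∀ x ∈ P.erase v, x ≠ v ∧ x ∈ P := fun x => Finset.mem_erase.1
  have htotal : ∀ x ∈ P.erase v, ∀ y ∈ P.erase v, x ≠ y →
      0 < cross (x - v) (y - v) ∨ 0 < cross (y - v) (x - v) := by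
    intro x hx y hy hxy
    have := cross_ne_zero_of_genPos hP hv (hmem x hx).2 (hmem y hy).2 (hmem x hx).1.symm
      (hmem y hy).1.symm hxy
    have hanti : cross (y - v) (x - v) = -cross (x - v) (y - v) := by simp only [cross]; ring
    rw [hanti, neg_pos]
    exact this.lt_or_gt.symm
  have htrans : ∀ x ∈ P.erase v, ∀ y ∈ P.erase v, ∀ z ∈ P.erase v,
      0 < cross (x - v) (y - v) → 0 < cross (y - v) (z - v) → 0 < cross (x - v) (z - v) := by
    intro x hx y hy z hz hxy hyz
    have hψx := sub_pos.2 (hψ x (hmem x hx).2 (hmem x hx).1)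
    have hψy := sub_pos.2 (hψ y (hmem y hy).2 (hmem y hy).1)
    have hψz := sub_pos.2 (hψ z (hmem z hz).2 (hmem z hz).1)
    have key : 0 < cross (x - v) (z - v) * (ψ y - ψ v) := by
      rw [← map_sub, cross_mul_eq_add, map_sub, map_sub]
      positivity
    exact pos_of_mul_pos_left key hψy.le
  obtain ⟨u, hu, hmin⟩ := Finset.exists_forall_rel hne htotal htrans
  obtain ⟨w, hw, hmax⟩ := Finset.exists_forall_rel (r := fun x y => 0 < cross (y - v) (x - v))
    hne (fun x hx y hy hxy => (htotal x hx y hy hxy).symm)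
    (fun x hx y hy z hz hxy hyz => htrans z hz y hy x hx hyz hxy)
  refine ⟨w, u, ⟨(hmem w hw).2, hv, (hmem w hw).1, fun x hx hxw hxv => ?_⟩,
    ⟨hv, (hmem u hu).2, (hmem u hu).1.symm, fun x hx hxv hxu =>
      hmin x (Finset.mem_erase.2 ⟨hxv, hx⟩) hxu⟩⟩
  have := hmax x (Finset.mem_erase.2 ⟨hxv, hx⟩) hxw
  simp only [cross, Prod.fst_sub, Prod.snd_sub] at this ⊢
  linarith

theorem IsHullVertex.exists_isHullEdge (hP : GenPos P) (hv : IsHullVertex P v)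
    (hne : (P.erase v).Nonempty) : ∃ w u, IsHullEdge P w v ∧ IsHullEdge P v u := by
  obtain ⟨f, t, hfv, hf⟩ := geometric_hahn_banach_point_closed (convex_convexHull ℝ _)
    ((P.erase v).finite_toSet.isClosed_convexHull ℝ) hv.2
  exact exists_isHullEdge_of_forall_lt hP f hv.1 (fun x hx hxv =>
    hfv.trans (hf x (subset_convexHull ℝ _ (Finset.mem_erase.2 ⟨hxv, hx⟩)))) hne

theorem hullGraph_adj : (hullGraph P).Adj x y ↔ IsHullEdge P x y ∨ IsHullEdge P y x := by
  rw [hullGraph, SimpleGraph.fromRel_adj]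
  exact and_iff_right_of_imp (Or.rec (·.ne) (·.ne.symm))

theorem isHullEdge_or_isHullEdge_of_adj (hvx : (hullGraph P).Adj v x)
    (hvy : (hullGraph P).Adj v y) (hxy : x ≠ y) :
    (IsHullEdge P x v ∧ IsHullEdge P v y) ∨ (IsHullEdge P y v ∧ IsHullEdge P v x) := by
  rw [hullGraph_adj] at hvx hvy
  rcases hvx with hvx | hxv <;> rcases hvy with hvy | hyv
  · exact absurd (hvx.right_unique hvy) hxy
  · exact Or.inr ⟨hyv, hvx⟩
  · exact Or.inl ⟨hxv, hvy⟩
  · exact absurd (hxv.left_unique hyv) hxy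

theorem eq_or_eq_of_adj (hvx : (hullGraph P).Adj v x) (hvy : (hullGraph P).Adj v y)
    (hxy : x ≠ y) (hvz : (hullGraph P).Adj v z) : z = x ∨ z = y := by
  rw [hullGraph_adj] at hvz
  rcases isHullEdge_or_isHullEdge_of_adj hvx hvy hxy with ⟨hxv, hvy⟩ | ⟨hyv, hvx⟩ <;>
    rcases hvz with hvz | hzv
  · exact Or.inr (hvy.right_unique hvz).symm
  · exact Or.inl (hzv.left_unique hxv)
  · exact Or.inl (hvx.right_unique hvz).symm
  · exact Or.inr (hzv.left_unique hyv)

theorem IsHullVertex.exists_adj_lt (hP : GenPos P) (hv : IsHullVertex P v)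
    (μ : ℝ × ℝ →ₗ[ℝ] ℝ) (hz : z ∈ P) (hzv : μ z < μ v) :
    ∃ n, (hullGraph P).Adj v n ∧ IsHullVertex P n ∧ μ n < μ v := by
  have hne : (P.erase v).Nonempty := ⟨z, Finset.mem_erase.2 ⟨fun h => hzv.ne (h ▸ rfl), hz⟩⟩
  obtain ⟨w, u, hwv, hvu⟩ := hv.exists_isHullEdge hP hne
  by_contra! h
  have hu := h u (hullGraph_adj.2 (Or.inl hvu)) hvu.isHullVertex_right
  have hw := h w (hullGraph_adj.2 (Or.inr hwv)) hwv.isHullVertex_left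
  exact hzv.not_ge (hwv.le_of_le hvu μ hu hw hz)

theorem mem_or_mem_or_mem_of_adj {B : Finset (ℝ × ℝ)}
    (hdom : ∀ v, IsEar P v → v ∉ B → ∃ b ∈ B, (hullGraph P).Adj v b)
    (hvx : (hullGraph P).Adj v x) (hvy : (hullGraph P).Adj v y) (hxy : x ≠ y)
    (μ : ℝ × ℝ →ₗ[ℝ] ℝ) {c : ℝ} (hv : μ v ≤ c) (hx : μ x ≤ c) (hy : μ y ≤ c)
    (hlow : ∀ z ∈ P, μ z ≤ c → z = v ∨ z = x ∨ z = y) : v ∈ B ∨ x ∈ B ∨ y ∈ B := by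
  have hear : IsEar P v := by
    rcases isHullEdge_or_isHullEdge_of_adj hvx hvy hxy with ⟨hxv, hvy⟩ | ⟨hyv, hvx⟩
    · exact hxv.isEar hvy μ hv hy hx fun z hz hzc => by have := hlow z hz hzc; tauto
    · exact hyv.isEar hvx μ hv hx hy hlow
  by_cases hvB : v ∈ B
  · exact Or.inl hvB
  obtain ⟨b, hbB, hvb⟩ := hdom v hear hvB
  rcases eq_or_eq_of_adj hvx hvy hxy hvb with rfl | rfl
  exacts [Or.inr (Or.inl hbB), Or.inr (Or.inr hbB)]

end Plane

namespace IsLowestThree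

open Plane

variable {P : Finset (ℝ × ℝ)} {μ : ℝ × ℝ →ₗ[ℝ] ℝ} {s₁ s₂ s₃ : ℝ × ℝ}

theorem snd_adj_fst (hP : GenPos P) (hs : IsLowestThree P μ s₁ s₂ s₃)
    (h₂ : IsHullVertex P s₂) : (hullGraph P).Adj s₂ s₁ := by
  obtain ⟨n, hadj, hn, hlt⟩ := h₂.exists_adj_lt hP μ hs.mem₁ hs.lt₁₂
  rcases hs.eq_or_eq_or_eq_of_le hn.1 (hlt.trans hs.lt₂₃).le with rfl | rfl | rfl
  · exact hadj
  · exact absurd hlt (lt_irrefl _)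
  · exact absurd hlt hs.lt₂₃.not_gt

theorem thd_adj_fst_or_snd (hP : GenPos P) (hs : IsLowestThree P μ s₁ s₂ s₃)
    (h₃ : IsHullVertex P s₃) :
    (hullGraph P).Adj s₃ s₁ ∨ ((hullGraph P).Adj s₃ s₂ ∧ IsHullVertex P s₂) := by
  obtain ⟨n, hadj, hn, hlt⟩ := h₃.exists_adj_lt hP μ hs.mem₁ (hs.lt₁₂.trans hs.lt₂₃)
  rcases hs.eq_or_eq_or_eq_of_le hn.1 hlt.le with rfl | rfl | rfl
  · exact Or.inl hadj
  · exact Or.inr ⟨hadj, hn⟩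
  · exact absurd hlt (lt_irrefl _)

theorem exists_isHullVertex_notMem (hP : GenPos P) (hs : IsLowestThree P μ s₁ s₂ s₃)
    {B : Finset (ℝ × ℝ)} (hB : ∀ b ∈ B, IsEar P b) (hind : (hullGraph P).IsIndepSet ↑B) :
    ∃ p, (p = s₁ ∨ p = s₂ ∨ p = s₃) ∧ IsHullVertex P p ∧ p ∉ B := by
  have h₁ : IsHullVertex P s₁ :=
    isHullVertex_of_forall_lt μ hs.mem₁ fun y hy hy₁ => hs.lt_of_ne_fst hy hy₁
  have hedge : ∀ p q, (hullGraph P).Adj p q → p ∉ B ∨ q ∉ B := by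
    intro p q hpq
    by_contra! h
    exact hind h.1 h.2 hpq.ne hpq
  by_cases h₂ : IsHullVertex P s₂
  · rcases hedge s₂ s₁ (hs.snd_adj_fst hP h₂) with h | h
    exacts [⟨s₂, by simp, h₂, h⟩, ⟨s₁, by simp, h₁, h⟩]
  by_cases h₃ : IsHullVertex P s₃
  · have h₃₁ := (hs.thd_adj_fst_or_snd hP h₃).resolve_right fun h => h₂ h.2
    rcases hedge s₃ s₁ h₃₁ with h | h
    exacts [⟨s₃, by simp, h₃, h⟩, ⟨s₁, by simp, h₁, h⟩]
  refine ⟨s₁, by simp, h₁, fun hB₁ => ?_⟩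
  obtain ⟨w, u, hws, hsu, hear⟩ := hB s₁ hB₁
  have hhigh : ∀ n, IsHullVertex P n → n ≠ s₁ → μ s₃ < μ n := fun n hn hn₁ =>
    hs.lt_of_ne n hn.1 hn₁ (fun h => h₂ (h ▸ hn)) (fun h => h₃ (h ▸ hn))
  have hu := hhigh u hsu.isHullVertex_right hsu.ne.symm
  have hw := hhigh w hws.isHullVertex_left hws.ne
  have h₂₁ : s₂ ≠ s₁ := fun h => hs.lt₁₂.ne' (congrArg μ h)
  have h₂u : s₂ ≠ u := fun h => h₂ (h ▸ hsu.isHullVertex_right)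
  have h₂w : s₂ ≠ w := fun h => h₂ (h ▸ hws.isHullVertex_left)
  exact hs.lt₂₃.not_gt (hws.lt_of_cross_nonpos hsu μ (hs.lt₁₂.trans hs.lt₂₃).le hu hw hs.mem₂
    h₂₁ h₂u h₂w (hear s₂ hs.mem₂ h₂₁))

theorem exists_not_isHullVertex_or_mem (hP : GenPos P) (hs : IsLowestThree P μ s₁ s₂ s₃)
    {B : Finset (ℝ × ℝ)} (hdom : ∀ v, IsEar P v → v ∉ B → ∃ b ∈ B, (hullGraph P).Adj v b) :
    ∃ q, (q = s₁ ∨ q = s₂ ∨ q = s₃) ∧ (¬IsHullVertex P q ∨ q ∈ B) := by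
  by_cases h₂ : IsHullVertex P s₂; swap
  · exact ⟨s₂, by simp, Or.inl h₂⟩
  by_cases h₃ : IsHullVertex P s₃; swap
  · exact ⟨s₃, by simp, Or.inl h₃⟩
  have hlow := fun z hz => hs.eq_or_eq_or_eq_of_le (y := z) hz
  have hne₂₃ : s₂ ≠ s₃ := fun h => hs.lt₂₃.ne (congrArg μ h)
  have hle₁ := (hs.lt₁₂.trans hs.lt₂₃).le
  rcases hs.thd_adj_fst_or_snd hP h₃ with h₃₁ | ⟨h₃₂, -⟩
  · rcases mem_or_mem_or_mem_of_adj hdom (hs.snd_adj_fst hP h₂).symm h₃₁.symm hne₂₃ μ hle₁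
      hs.lt₂₃.le le_rfl hlow with h | h | h
    exacts [⟨s₁, by simp, Or.inr h⟩, ⟨s₂, by simp, Or.inr h⟩, ⟨s₃, by simp, Or.inr h⟩]
  · have hne₁₃ : s₁ ≠ s₃ := fun h => (hs.lt₁₂.trans hs.lt₂₃).ne (congrArg μ h)
    rcases mem_or_mem_or_mem_of_adj hdom (hs.snd_adj_fst hP h₂) h₃₂.symm hne₁₃ μ hs.lt₂₃.le
      hle₁ le_rfl (fun z hz hzc => by have := hlow z hz hzc; tauto) with h | h | h
    exacts [⟨s₂, by simp, Or.inr h⟩, ⟨s₁, by simp, Or.inr h⟩, ⟨s₃, by simp, Or.inr h⟩]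

end IsLowestThree

open Plane in
theorem stmt10 (P : Finset (ℝ × ℝ)) (hP : GenPos P) :
    ∃ f : ℝ × ℝ → Fin 2, ∀ a b c : ℝ, (a, b) ≠ ((0 : ℝ), (0 : ℝ)) →
      3 ≤ (halfPlane a b c ∩ ↑P).ncard →
      ∃ p ∈ P, ∃ q ∈ P, p ∈ halfPlane a b c ∧ q ∈ halfPlane a b c ∧ f p ≠ f q := by
  classical
  obtain ⟨B, hBP, hind, hdom⟩ := (hullGraph P).exists_isIndepSet_forall_exists_adj
    (P.filter (IsEar P))
  refine ⟨fun x => if IsHullVertex P x ∧ x ∉ B then 0 else 1, fun a b c hab hn => ?_⟩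
  obtain ⟨μ, s₁, s₂, s₃, hs, h₁, h₂, h₃⟩ := exists_isLowestThree_subset_halfPlane P hab hn
  have hmem : ∀ p, p = s₁ ∨ p = s₂ ∨ p = s₃ → p ∈ P ∧ p ∈ halfPlane a b c := by
    rintro p (rfl | rfl | rfl)
    exacts [⟨hs.mem₁, h₁⟩, ⟨hs.mem₂, h₂⟩, ⟨hs.mem₃, h₃⟩]
  obtain ⟨p, hp, hred⟩ := hs.exists_isHullVertex_notMem hP
    (fun b hb => (Finset.mem_filter.1 (hBP hb)).2) hind
  obtain ⟨q, hq, hblue⟩ := hs.exists_not_isHullVertex_or_mem hP fun v hv hvB =>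
    hdom v (Finset.mem_filter.2 ⟨hv.mem, hv⟩) hvB
  refine ⟨p, (hmem p hp).1, q, (hmem q hq).1, (hmem p hp).2, (hmem q hq).2, ?_⟩
  simp only [if_pos hred, if_neg (show ¬(IsHullVertex P q ∧ q ∉ B) by tauto)]
  decide
end

section
/- Any finite family of half-planes can be colored with 3 colors such that every point of the plane contained in at least 2 of the half-planes is contained in two half-planes of different colors. -/
/-!
Normalise every half-plane to a unit normal `(cos θ, sin θ)` and measure how deep a point lies in
it by its signed distance to the boundary line. Join two half-planes when, at some point, they are
the two deepest ones (ties broken by index). A point covered at least twice is covered by its two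
deepest half-planes, so a proper 3-colouring of this graph is what we need.

Order the half-planes by `θ`. If `a < b < c < d`, with `a, c` the two deepest at `p` and `b, d`
the two deepest at `q`, then the chords `AC` and `BD` of the unit circle cross, so
`λ A + μ C = ν B + ρ D` with positive weights and `λ + μ = ν + ρ`. Hence the combination
`λ dₐ + μ d_c - ν d_b - ρ d_d` of depths is constant; it is `≥ 0` at `p` and `≤ 0` at `q`, and
the ties this forces contradict the tie-break. So the graph has no crossing chords in angular order,
and such (outerplanar) graphs are 3-colourable: split along a chord with vertices on both sides, or
else the last vertex has at most two neighbours.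
-/
open Real Finset Function

theorem exists_fin_three_ne_ne : ∀ x y : Fin 3, ∃ c, c ≠ x ∧ c ≠ y := by decide

theorem exists_injective_fin_three_map_pair :
    ∀ x₁ y₁ x₂ y₂ : Fin 3, x₁ ≠ y₁ → x₂ ≠ y₂ →
      ∃ g : Fin 3 → Fin 3, Injective g ∧ g x₁ = x₂ ∧ g y₁ = y₂ := by
  decide

namespace SimpleGraph

variable {α : Type*} (G : SimpleGraph α)

theorem exists_coloring_of_adj_eq_or_eq [DecidableEq α] {s : Finset α} {z u v : α}
    (hz : ∀ y ∈ s, G.Adj y z → y = u ∨ y = v) {f : α → Fin 3}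
    (hf : ∀ i ∈ s.erase z, ∀ j ∈ s.erase z, G.Adj i j → f i ≠ f j) :
    ∃ g : α → Fin 3, ∀ i ∈ s, ∀ j ∈ s, G.Adj i j → g i ≠ g j := by
  obtain ⟨c, hcu, hcv⟩ := exists_fin_three_ne_ne (f u) (f v)
  have hc : ∀ y ∈ s, G.Adj y z → f y ≠ c := by
    intro y hy hyz
    rcases hz y hy hyz with rfl | rfl
    exacts [hcu.symm, hcv.symm]
  refine ⟨update f z c, fun i hi j hj hij => ?_⟩
  rcases eq_or_ne i z with rfl | hiz
  · rw [update_self, update_of_ne (G.ne_of_adj hij).symm]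
    exact (hc j hj hij.symm).symm
  rcases eq_or_ne j z with rfl | hjz
  · rw [update_self, update_of_ne hiz]
    exact hc i hi hij
  rw [update_of_ne hiz, update_of_ne hjz]
  exact hf i (mem_erase.2 ⟨hiz, hi⟩) j (mem_erase.2 ⟨hjz, hj⟩) hij

/-- No two edges cross when the vertices are placed on a circle in increasing order. -/
def IsNoncrossing [LinearOrder α] : Prop :=
  ∀ ⦃a b c d : α⦄, a < b → b < c → c < d → G.Adj a c → ¬ G.Adj b d

variable {G} [LinearOrder α]

theorem IsNoncrossing.mem_Icc_of_adj (hG : G.IsNoncrossing) {a b i j : α} (hab : G.Adj a b)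
    (hi : i ∈ Set.Ioo a b) (hij : G.Adj i j) : j ∈ Set.Icc a b := by
  by_contra hj
  rcases not_and_or.1 hj with hj | hj <;> push Not at hj
  · exact hG hj hi.1 hi.2 hij.symm hab
  · exact hG hi.1 hi.2 hj hab hij

theorem IsNoncrossing.exists_coloring_of_adj (hG : G.IsNoncrossing) {s : Finset α} {a b : α}
    (ha : a ∈ s) (hb : b ∈ s) (hlt : a < b) (hab : G.Adj a b) {f₁ f₂ : α → Fin 3}
    (hf₁ : ∀ i ∈ s.filter (· ∈ Set.Icc a b), ∀ j ∈ s.filter (· ∈ Set.Icc a b),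
      G.Adj i j → f₁ i ≠ f₁ j)
    (hf₂ : ∀ i ∈ s.filter (· ∉ Set.Ioo a b), ∀ j ∈ s.filter (· ∉ Set.Ioo a b),
      G.Adj i j → f₂ i ≠ f₂ j) :
    ∃ f : α → Fin 3, ∀ i ∈ s, ∀ j ∈ s, G.Adj i j → f i ≠ f j := by
  have hIcc : ∀ {i}, i ∈ s → i ∈ Set.Icc a b → i ∈ s.filter (· ∈ Set.Icc a b) :=
    fun hi h => mem_filter.2 ⟨hi, h⟩
  have hIoo : ∀ {i}, i ∈ s → i ∉ Set.Ioo a b → i ∈ s.filter (· ∉ Set.Ioo a b) :=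
    fun hi h => mem_filter.2 ⟨hi, h⟩
  obtain ⟨g, hg, hga, hgb⟩ := exists_injective_fin_three_map_pair _ _ _ _
    (hf₂ a (hIoo ha fun h => h.1.false) b (hIoo hb fun h => h.2.false) hab)
    (hf₁ a (hIcc ha ⟨le_rfl, hlt.le⟩) b (hIcc hb ⟨hlt.le, le_rfl⟩) hab)
  set f := fun i => if i ∈ Set.Ioo a b then f₁ i else g (f₂ i)
  -- `g` matches the two colourings at `a` and `b`, the only common vertices of the two parts
  have hf : ∀ i ∈ Set.Icc a b, f i = f₁ i := by
    rintro i ⟨hai, hib⟩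
    by_cases hi : i ∈ Set.Ioo a b
    · exact if_pos hi
    rcases hai.eq_or_lt with rfl | hai
    · exact (if_neg hi).trans hga
    rcases hib.eq_or_lt with rfl | hib
    · exact (if_neg hi).trans hgb
    exact absurd ⟨hai, hib⟩ hi
  refine ⟨f, fun i hi j hj hij => ?_⟩
  by_cases hin : i ∈ Set.Ioo a b ∨ j ∈ Set.Ioo a b
  · have hi' : i ∈ Set.Icc a b := hin.elim (fun h => Set.Ioo_subset_Icc_self h)
      fun h => hG.mem_Icc_of_adj hab h hij.symm
    have hj' : j ∈ Set.Icc a b := hin.elim (fun h => hG.mem_Icc_of_adj hab h hij)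
      fun h => Set.Ioo_subset_Icc_self h
    rw [hf i hi', hf j hj']
    exact hf₁ i (hIcc hi hi') j (hIcc hj hj') hij
  · push Not at hin
    simp only [f, if_neg hin.1, if_neg hin.2]
    exact hg.ne (hf₂ i (hIoo hi hin.1) j (hIoo hj hin.2) hij)

theorem IsNoncrossing.exists_coloring (hG : G.IsNoncrossing) (s : Finset α) :
    ∃ f : α → Fin 3, ∀ i ∈ s, ∀ j ∈ s, G.Adj i j → f i ≠ f j := by
  induction s using Finset.strongInduction with
  | H s ih =>
  by_cases hsplit :
      ∃ y ∈ s, ∃ a ∈ s, ∃ x ∈ s, ∃ b ∈ s, y < a ∧ a < x ∧ x < b ∧ G.Adj a b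
  · obtain ⟨y, hy, a, ha, x, hx, b, hb, hya, hax, hxb, hab⟩ := hsplit
    obtain ⟨f₁, hf₁⟩ := ih (s.filter (· ∈ Set.Icc a b))
      (filter_ssubset.2 ⟨y, hy, fun h => hya.not_ge h.1⟩)
    obtain ⟨f₂, hf₂⟩ := ih (s.filter (· ∉ Set.Ioo a b))
      (filter_ssubset.2 ⟨x, hx, fun h => h ⟨hax, hxb⟩⟩)
    exact hG.exists_coloring_of_adj ha hb (hax.trans hxb) hab hf₁ hf₂
  -- no chord separates two vertices of `s`: the neighbours of the last vertex `z` other than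
  -- the first vertex `m` all coincide
  push Not at hsplit
  obtain rfl | hs := s.eq_empty_or_nonempty
  · exact ⟨0, by simp⟩
  set z := s.max' hs
  set m := s.min' hs
  have hnbr : ∀ y₁ ∈ s, ∀ y₂ ∈ s, G.Adj y₁ z → G.Adj y₂ z → m < y₁ → ¬ y₁ < y₂ :=
    fun y₁ hy₁ y₂ hy₂ h₁ h₂ hm h => hsplit m (min'_mem s hs) y₁ hy₁ y₂ hy₂ z (max'_mem s hs) hm
      h ((le_max' s y₂ hy₂).lt_of_ne (G.ne_of_adj h₂)) h₁
  obtain ⟨v, hv⟩ : ∃ v, ∀ y ∈ s, G.Adj y z → y = m ∨ y = v := by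
    by_cases h : ∃ v ∈ s, G.Adj v z ∧ m < v
    · obtain ⟨v, hv, hvz, hmv⟩ := h
      refine ⟨v, fun y hy hyz => ?_⟩
      rcases (min'_le s y hy).eq_or_lt with h | hmy
      · exact Or.inl h.symm
      · exact Or.inr (le_antisymm (not_lt.1 (hnbr v hv y hy hvz hyz hmv))
          (not_lt.1 (hnbr y hy v hv hyz hvz hmy)))
    · push Not at h
      exact ⟨m, fun y hy hyz => Or.inl (le_antisymm (h y hy hyz) (min'_le s y hy))⟩
  obtain ⟨f, hf⟩ := ih (s.erase z) (erase_ssubset (max'_mem s hs))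
  exact G.exists_coloring_of_adj_eq_or_eq hv hf

theorem colorable_three_of_isNoncrossing_map {ι : Type*} [Finite ι] {G : SimpleGraph ι}
    (e : ι ↪ α) (hG : (G.map e).IsNoncrossing) : G.Colorable 3 := by
  have := Fintype.ofFinite ι
  obtain ⟨f, hf⟩ := hG.exists_coloring (univ.map e)
  exact ⟨Coloring.mk (f ∘ e) fun h =>
    hf _ (mem_map_of_mem e (mem_univ _)) _ (mem_map_of_mem e (mem_univ _)) (map_adj_apply.2 h)⟩

end SimpleGraph

def signedArea (A B C : ℝ × ℝ) : ℝ := (B.1 - A.1) * (C.2 - A.2) - (B.2 - A.2) * (C.1 - A.1)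

theorem signedArea_add_signedArea (A B C D : ℝ × ℝ) :
    signedArea B C D + signedArea A B D = signedArea A C D + signedArea A B C := by
  unfold signedArea; ring

/-- The affine dependence of four points in the plane. When `ABCD` is a convex quadrilateral all
four coefficients are positive, and both sides locate the crossing of the diagonals `AC`, `BD`. -/
theorem signedArea_smul_add_smul (A B C D : ℝ × ℝ) :
    signedArea B C D • A + signedArea A B D • C =
      signedArea A C D • B + signedArea A B C • D := by
  ext <;> simp only [signedArea, Prod.fst_add, Prod.snd_add, Prod.smul_fst, Prod.smul_snd,
    smul_eq_mul] <;> ring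

theorem sin_add_sin_sub_sin_add (φ ψ : ℝ) :
    sin φ + sin ψ - sin (φ + ψ) = 4 * sin (φ / 2) * sin (ψ / 2) * sin ((φ + ψ) / 2) := by
  obtain ⟨u, rfl⟩ : ∃ u, φ = 2 * u := ⟨φ / 2, by ring⟩
  obtain ⟨v, rfl⟩ : ∃ v, ψ = 2 * v := ⟨ψ / 2, by ring⟩
  rw [show 2 * u + 2 * v = 2 * (u + v) by ring, mul_div_cancel_left₀ _ two_ne_zero,
    mul_div_cancel_left₀ _ two_ne_zero, mul_div_cancel_left₀ _ two_ne_zero, sin_two_mul,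
    sin_two_mul, sin_two_mul, sin_add, cos_add]
  linear_combination (-2 * sin u * cos u) * sin_sq_add_cos_sq v
    + (-2 * sin v * cos v) * sin_sq_add_cos_sq u

theorem signedArea_cos_sin_pos {x y z : ℝ} (hxy : x < y) (hyz : y < z) (hzx : z < x + 2 * π) :
    0 < signedArea (cos x, sin x) (cos y, sin y) (cos z, sin z) := by
  have h : signedArea (cos x, sin x) (cos y, sin y) (cos z, sin z)
      = sin (y - x) + sin (z - y) - sin ((y - x) + (z - y)) := by
    rw [show (y - x) + (z - y) = z - x by ring]
    simp only [signedArea, sin_sub]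
    ring
  rw [h, sin_add_sin_sub_sin_add]
  have h₁ := sin_pos_of_pos_of_lt_pi (x := (y - x) / 2) (by linarith) (by linarith)
  have h₂ := sin_pos_of_pos_of_lt_pi (x := (z - y) / 2) (by linarith) (by linarith)
  have h₃ := sin_pos_of_pos_of_lt_pi (x := ((y - x) + (z - y)) / 2) (by linarith) (by linarith)
  positivity

noncomputable def halfPlaneDepth (θ c : ℝ) (p : ℝ × ℝ) : ℝ :=
  c - (cos θ * p.1 + sin θ * p.2)

theorem weighted_halfPlaneDepth_eq {θa θb θc θd ca cb cc cd l m n r : ℝ}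
    (h : l • (cos θa, sin θa) + m • (cos θc, sin θc) =
      n • (cos θb, sin θb) + r • (cos θd, sin θd))
    (p : ℝ × ℝ) :
    l * halfPlaneDepth θa ca p + m * halfPlaneDepth θc cc p - n * halfPlaneDepth θb cb p
      - r * halfPlaneDepth θd cd p = l * ca + m * cc - n * cb - r * cd := by
  obtain ⟨h₁, h₂⟩ := Prod.ext_iff.1 h
  simp only [Prod.fst_add, Prod.snd_add, Prod.smul_fst, Prod.smul_snd, smul_eq_mul] at h₁ h₂
  unfold halfPlaneDepth
  linear_combination (-p.1) * h₁ + (-p.2) * h₂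

theorem eq_of_weighted_sum_eq {l m n r a b c d a' b' c' d' : ℝ}
    (hl : 0 < l) (hm : 0 < m) (hn : 0 < n) (hr : 0 < r) (hsum : l + m = n + r)
    (hba : b ≤ a) (hbc : b ≤ c) (hda : d ≤ a) (hdc : d ≤ c)
    (hab' : a' ≤ b') (had' : a' ≤ d') (hcb' : c' ≤ b') (hcd' : c' ≤ d')
    (h : l * a + m * c - n * b - r * d = l * a' + m * c' - n * b' - r * d') :
    a = b ∧ a' = b' := by
  -- times `l + m = n + r`, each weighted gap splits into nonnegative pairwise differences
  have hp : (l + m) * (l * a + m * c - n * b - r * d) - n * l * (a - b)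
      = n * m * (c - b) + r * l * (a - d) + r * m * (c - d) := by
    linear_combination (l * a + m * c) * hsum
  have hq : (n + r) * (n * b' + r * d' - l * a' - m * c') - l * n * (b' - a')
      = l * r * (d' - a') + m * n * (b' - c') + m * r * (d' - c') := by
    linear_combination (-(n * b' + r * d')) * hsum
  have hpq : (l + m) * (l * a + m * c - n * b - r * d)
      + (n + r) * (n * b' + r * d' - l * a' - m * c') = 0 := by
    linear_combination (l + m) * h + (l * a' + m * c' - n * b' - r * d') * hsum
  have hzero : n * l * (a - b) + l * n * (b' - a')
      + (n * m * (c - b) + r * l * (a - d) + r * m * (c - d))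
      + (l * r * (d' - a') + m * n * (b' - c') + m * r * (d' - c')) = 0 := by
    linear_combination hpq - hp - hq
  have hnl := mul_pos hn hl
  have hln := mul_pos hl hn
  obtain ⟨h₁, h₂⟩ : n * l * (a - b) = 0 ∧ l * n * (b' - a') = 0 := by
    constructor <;> linarith [mul_nonneg hnl.le (sub_nonneg.2 hba),
      mul_nonneg hln.le (sub_nonneg.2 hab'), mul_nonneg (mul_nonneg hn.le hm.le) (sub_nonneg.2 hbc),
      mul_nonneg (mul_nonneg hr.le hl.le) (sub_nonneg.2 hda),
      mul_nonneg (mul_nonneg hr.le hm.le) (sub_nonneg.2 hdc),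
      mul_nonneg (mul_nonneg hl.le hr.le) (sub_nonneg.2 had'),
      mul_nonneg (mul_nonneg hm.le hn.le) (sub_nonneg.2 hcb'),
      mul_nonneg (mul_nonneg hm.le hr.le) (sub_nonneg.2 hcd')]
  rw [mul_eq_zero, sub_eq_zero] at h₁ h₂
  exact ⟨h₁.resolve_left hnl.ne', (h₂.resolve_left hln.ne').symm⟩

def topPairGraph {P ι β : Type*} [LinearOrder β] (w : P → ι → β) : SimpleGraph ι where
  Adj i j := i ≠ j ∧ ∃ p, ∀ k, k ≠ i → k ≠ j → w p k < w p i ∧ w p k < w p j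
  symm := ⟨fun _ _ ⟨hij, p, hp⟩ => ⟨hij.symm, p, fun k hki hkj => (hp k hkj hki).symm⟩⟩
  loopless := ⟨fun _ h => h.1 rfl⟩

theorem topPairGraph_adj {P ι β : Type*} [LinearOrder β] {w : P → ι → β} {i j : ι} :
    (topPairGraph w).Adj i j ↔
      i ≠ j ∧ ∃ p, ∀ k, k ≠ i → k ≠ j → w p k < w p i ∧ w p k < w p j :=
  Iff.rfl

theorem exists_topPairGraph_adj {P ι β : Type*} [Finite ι] [LinearOrder β] (w : P → ι → β)
    {p : P} (hw : Injective (w p)) {S : Set ι}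
    (hS : ∀ ⦃i j⦄, w p i ≤ w p j → i ∈ S → j ∈ S)
    {x y : ι} (hx : x ∈ S) (hy : y ∈ S) (hxy : x ≠ y) :
    ∃ i ∈ S, ∃ j ∈ S, (topPairGraph w).Adj i j := by
  have : Nonempty ι := ⟨x⟩
  obtain ⟨i, hi⟩ := Finite.exists_max (w p)
  obtain ⟨z, hzS, hzi⟩ : ∃ z ∈ S, z ≠ i := by
    rcases eq_or_ne x i with rfl | h
    exacts [⟨y, hy, hxy.symm⟩, ⟨x, hx, h⟩]
  have : Nonempty {k // k ≠ i} := ⟨⟨z, hzi⟩⟩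
  obtain ⟨⟨j, hji⟩, hj⟩ := Finite.exists_max fun k : {k // k ≠ i} => w p k
  refine ⟨i, hS (hi x) hx, j, hS (hj ⟨z, hzi⟩) hzS,
    topPairGraph_adj.2 ⟨hji.symm, p, fun k hki hkj => ⟨?_, ?_⟩⟩⟩
  · exact (hi k).lt_of_ne (hw.ne hki)
  · exact (hj ⟨k, hki⟩).lt_of_ne (hw.ne hkj)

section Depth

variable {ι : Type*} [LinearOrder ι] (θ t : ι → ℝ)

noncomputable def depthScore (p : ℝ × ℝ) (i : ι) : ℝ ×ₗ ι :=
  toLex (halfPlaneDepth (θ i) (t i) p, i)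

def angleKey : ι ↪ ℝ ×ₗ ι :=
  ⟨fun i => toLex (θ i, i), fun _ _ h => congrArg (fun x => (ofLex x).2) h⟩

variable {θ t}

omit [LinearOrder ι] in
theorem depthScore_injective (p : ℝ × ℝ) : Injective (depthScore θ t p) :=
  fun _ _ h => congrArg (fun x => (ofLex x).2) h

theorem halfPlaneDepth_le_of_depthScore_le {p : ℝ × ℝ} {i j : ι}
    (h : depthScore θ t p i ≤ depthScore θ t p j) :
    halfPlaneDepth (θ i) (t i) p ≤ halfPlaneDepth (θ j) (t j) p :=
  (Prod.Lex.toLex_le_toLex'.1 h).1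

theorem lt_of_depthScore_lt_of_halfPlaneDepth_eq {p : ℝ × ℝ} {i j : ι}
    (h : depthScore θ t p i < depthScore θ t p j)
    (heq : halfPlaneDepth (θ i) (t i) p = halfPlaneDepth (θ j) (t j) p) : i < j :=
  (Prod.Lex.toLex_lt_toLex'.1 h).2 heq

/-- Parallel half-planes are ordered by depth the same way at every point. -/
theorem angle_ne_of_depthScore_lt {p q : ℝ × ℝ} {i j : ι}
    (hp : depthScore θ t p i < depthScore θ t p j)
    (hq : depthScore θ t q j < depthScore θ t q i) :
    θ i ≠ θ j := by
  intro hθ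
  have hdiff : ∀ r, halfPlaneDepth (θ i) (t i) r = halfPlaneDepth (θ j) (t j) r + (t i - t j) :=
    fun r => by simp only [halfPlaneDepth, hθ]; ring
  simp only [depthScore, Prod.Lex.toLex_lt_toLex, hdiff] at hp hq
  rcases hp with hp | ⟨hp, hij⟩ <;> rcases hq with hq | ⟨hq, hji⟩
  · linarith
  · linarith
  · linarith
  · exact hij.not_gt hji

theorem angle_lt_of_angleKey_lt {i j : ι} (h : angleKey θ i < angleKey θ j)
    (hne : θ i ≠ θ j) : θ i < θ j :=
  (Prod.Lex.toLex_lt_toLex'.1 h).1.lt_of_ne hne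

theorem topPairGraph_depthScore_not_adj (hθ : ∀ i, θ i ∈ Set.Ioc (-π) π) {a b c d : ι}
    (hab : angleKey θ a < angleKey θ b) (hbc : angleKey θ b < angleKey θ c)
    (hcd : angleKey θ c < angleKey θ d) (hac : (topPairGraph (depthScore θ t)).Adj a c) :
    ¬ (topPairGraph (depthScore θ t)).Adj b d := by
  rw [topPairGraph_adj] at hac ⊢
  rintro ⟨-, q, hq⟩
  obtain ⟨-, p, hp⟩ := hac
  have ne : ∀ {i j}, angleKey θ i < angleKey θ j → i ≠ j := fun h e => h.ne (congrArg _ e)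
  have had := hab.trans (hbc.trans hcd)
  obtain ⟨hpba, hpbc⟩ := hp b (ne hab).symm (ne hbc)
  obtain ⟨hpda, hpdc⟩ := hp d (ne had).symm (ne hcd).symm
  obtain ⟨hqab, hqad⟩ := hq a (ne hab) (ne had)
  obtain ⟨hqcb, hqcd⟩ := hq c (ne hbc).symm (ne hcd)
  have θab := angle_lt_of_angleKey_lt hab (angle_ne_of_depthScore_lt hqab hpba)
  have θbc := angle_lt_of_angleKey_lt hbc (angle_ne_of_depthScore_lt hpbc hqcb)
  have θcd := angle_lt_of_angleKey_lt hcd (angle_ne_of_depthScore_lt hqcd hpdc)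
  have θda : θ d < θ a + 2 * π := by linarith [(hθ a).1, (hθ d).2]
  -- `ABCD` is a convex quadrilateral inscribed in the unit circle
  set A : ℝ × ℝ := (cos (θ a), sin (θ a))
  set B : ℝ × ℝ := (cos (θ b), sin (θ b))
  set C : ℝ × ℝ := (cos (θ c), sin (θ c))
  set D : ℝ × ℝ := (cos (θ d), sin (θ d))
  have hconst := fun r => weighted_halfPlaneDepth_eq (ca := t a) (cb := t b) (cc := t c)
    (cd := t d) (signedArea_smul_add_smul A B C D) r
  obtain ⟨hdp, hdq⟩ := eq_of_weighted_sum_eq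
    (signedArea_cos_sin_pos θbc θcd (by linarith))
    (signedArea_cos_sin_pos θab (θbc.trans θcd) θda)
    (signedArea_cos_sin_pos (θab.trans θbc) θcd θda)
    (signedArea_cos_sin_pos θab θbc (by linarith))
    (signedArea_add_signedArea A B C D)
    (halfPlaneDepth_le_of_depthScore_le hpba.le) (halfPlaneDepth_le_of_depthScore_le hpbc.le)
    (halfPlaneDepth_le_of_depthScore_le hpda.le) (halfPlaneDepth_le_of_depthScore_le hpdc.le)
    (halfPlaneDepth_le_of_depthScore_le hqab.le) (halfPlaneDepth_le_of_depthScore_le hqad.le)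
    (halfPlaneDepth_le_of_depthScore_le hqcb.le) (halfPlaneDepth_le_of_depthScore_le hqcd.le)
    ((hconst p).trans (hconst q).symm)
  exact (lt_of_depthScore_lt_of_halfPlaneDepth_eq hpba hdp.symm).not_gt
    (lt_of_depthScore_lt_of_halfPlaneDepth_eq hqab hdq)

theorem colorable_topPairGraph_depthScore [Finite ι] (hθ : ∀ i, θ i ∈ Set.Ioc (-π) π) :
    (topPairGraph (depthScore θ t)).Colorable 3 := by
  refine SimpleGraph.colorable_three_of_isNoncrossing_map (angleKey θ) ?_
  intro _ _ _ _ hab hbc hcd hac' hbd'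
  obtain ⟨a, c, hac, rfl, rfl⟩ := (SimpleGraph.map_adj _ _ _ _).1 hac'
  obtain ⟨b, d, hbd, rfl, rfl⟩ := (SimpleGraph.map_adj _ _ _ _).1 hbd'
  exact topPairGraph_depthScore_not_adj hθ hab hbc hcd hac hbd

end Depth

theorem mem_halfPlane_iff {a b c : ℝ} (h : (a, b) ≠ (0, 0)) (p : ℝ × ℝ) :
    p ∈ halfPlane a b c ↔
      0 ≤ halfPlaneDepth (Complex.arg ⟨a, b⟩) (c / ‖(⟨a, b⟩ : ℂ)‖) p := by
  have hz : (⟨a, b⟩ : ℂ) ≠ 0 := fun hz => h (by simp_all [Complex.ext_iff])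
  have hr : 0 < ‖(⟨a, b⟩ : ℂ)‖ := norm_pos_iff.2 hz
  have hdepth : halfPlaneDepth (Complex.arg ⟨a, b⟩) (c / ‖(⟨a, b⟩ : ℂ)‖) p
      = (c - (a * p.1 + b * p.2)) / ‖(⟨a, b⟩ : ℂ)‖ := by
    rw [halfPlaneDepth, Complex.cos_arg hz, Complex.sin_arg]
    ring
  rw [hdepth, le_div_iff₀ hr, zero_mul, sub_nonneg]
  rfl

theorem stmt11 (n : ℕ) (H : Fin n → ℝ × ℝ × ℝ)
    (hH : ∀ i, ((H i).1, (H i).2.1) ≠ ((0 : ℝ), (0 : ℝ))) :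
    ∃ f : Fin n → Fin 3, ∀ p : ℝ × ℝ,
      2 ≤ {i : Fin n | p ∈ halfPlane (H i).1 (H i).2.1 (H i).2.2}.ncard →
      ∃ i j : Fin n, p ∈ halfPlane (H i).1 (H i).2.1 (H i).2.2 ∧
        p ∈ halfPlane (H j).1 (H j).2.1 (H j).2.2 ∧ f i ≠ f j := by
  set θ : Fin n → ℝ := fun i => Complex.arg ⟨(H i).1, (H i).2.1⟩
  set t : Fin n → ℝ := fun i => (H i).2.2 / ‖(⟨(H i).1, (H i).2.1⟩ : ℂ)‖
  have hmem : ∀ i p, p ∈ halfPlane (H i).1 (H i).2.1 (H i).2.2 ↔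
      0 ≤ halfPlaneDepth (θ i) (t i) p := fun i => mem_halfPlane_iff (hH i)
  obtain ⟨C⟩ := colorable_topPairGraph_depthScore (t := t) fun i => Complex.arg_mem_Ioc _
  refine ⟨C, fun p hp => ?_⟩
  obtain ⟨x, y, hx, hy, hxy⟩ := (Set.one_lt_ncard_iff (Set.toFinite _)).1 hp
  obtain ⟨i, hi, j, hj, hij⟩ := exists_topPairGraph_adj _ (depthScore_injective p)
    (fun i j hle hi => (hmem j p).2 (((hmem i p).1 hi).trans
      (halfPlaneDepth_le_of_depthScore_le hle))) hx hy hxy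
  exact ⟨i, j, hi, hj, C.valid hij⟩
end

section
/- Any finite family of half-planes can be colored with 2 colors such that every point of the plane contained in at least 4 of the half-planes is contained in two half-planes of different colors. -/
/-!
After a shear `(x, y) ↦ (x - t y, y)` that makes no boundary line vertical, each half-plane is
`{Y ≤ ℓ(X)}` or `{-Y ≤ ℓ(X)}` for a non-vertical line `ℓ`. It then suffices to 2-colour any finite
family of lines so that a point below at least two of them is below a red one and a point below at
least three is below lines of both colours: a point in four half-planes lies in three of one kind or
in two of each, and on the second kind the colours are swapped.

Among parallel lines, a point below two of them is below the highest one; so the highest line of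
each slope is coloured as in the family of these highest lines, which have distinct slopes, and the
other lines get the opposite colour.

For distinct slopes, lines off the upper envelope are blue, and an envelope line is a danger line
if it is the only envelope line above some point that is below at least two lines. Danger lines are
red, and the other envelope lines alternate in colour in slope order, restarting after each danger
line. The envelope lines above a point are consecutive in slope order, so a point below two lines
is below a danger line or below two consecutive envelope lines, one of which is red. If all of at
least three lines above a point `q` lie on the envelope, the middle `e` of three consecutive ones is
not a danger line: a line `w` witnessing that is below `q`, where both neighbours of `e` are above,
and above a point where they are not; since the envelope lines adjacent to `w` in slope dominate
it, the slope of `w` lies strictly between those of the neighbours, and such a line cannot cross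
both of them in the same direction. So if `e` is red, the envelope line before it is blue.
-/

open Function

namespace LineColoring

variable {ι : Type*}

lemma lt_of_crossing_le_lt {su sw tu tw X₁ X₂ : ℝ} (h : su < sw)
    (h₁ : tw + sw * X₁ ≤ tu + su * X₁) (h₂ : tu + su * X₂ < tw + sw * X₂) : X₁ < X₂ := by
  nlinarith

lemma lt_of_crossing_lt_le {su sw tu tw X₁ X₂ : ℝ} (h : su < sw)
    (h₁ : tw + sw * X₁ < tu + su * X₁) (h₂ : tu + su * X₂ ≤ tw + sw * X₂) : X₁ < X₂ := by
  nlinarith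

lemma exists_lt_lt_of_two_lt_ncard {α : Type*} [LinearOrder α] [Finite ι] {f : ι → α}
    (hf : Injective f) {T : Set ι} (h : 2 < T.ncard) :
    ∃ a ∈ T, ∃ b ∈ T, ∃ c ∈ T, f a < f b ∧ f b < f c := by
  obtain ⟨x, y, z, hx, hy, hz, hxy, hxz, hyz⟩ := (Set.two_lt_ncard_iff).1 h
  obtain ⟨a, ha, hmin⟩ := Set.exists_min_image T f (Set.toFinite T) ⟨x, hx⟩
  obtain ⟨c, hc, hmax⟩ := Set.exists_max_image T f (Set.toFinite T) ⟨x, hx⟩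
  obtain ⟨b, hb, hba, hbc⟩ : ∃ b ∈ T, b ≠ a ∧ b ≠ c := by
    by_contra! hno
    rcases eq_or_ne x a with rfl | hxa
    · exact hyz ((hno y hy hxy.symm).trans (hno z hz hxz.symm).symm)
    rcases eq_or_ne y a with rfl | hya
    · exact hxz ((hno x hx hxa).trans (hno z hz hyz.symm).symm)
    · exact hxy ((hno x hx hxa).trans (hno y hy hya).symm)
  exact ⟨a, ha, b, hb, c, hc, (hmin b hb).lt_of_ne (hf.ne hba.symm),
    (hmax b hb).lt_of_ne (hf.ne hbc)⟩

def linesAbove (s τ : ι → ℝ) (X Y : ℝ) : Set ι := {i | Y ≤ τ i + s i * X}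

def IsAboveColoring (s τ : ι → ℝ) (χ : ι → Bool) : Prop :=
  ∀ X Y, (2 ≤ (linesAbove s τ X Y).ncard → ∃ i ∈ linesAbove s τ X Y, χ i = true) ∧
    (3 ≤ (linesAbove s τ X Y).ncard → ∃ i ∈ linesAbove s τ X Y, χ i = false)

def upperEnvelope (s τ : ι → ℝ) : Set ι := {i | ∃ X, ∀ j, τ j + s j * X ≤ τ i + s i * X}

def SlopeCovBy (s τ : ι → ℝ) (u w : ι) : Prop :=
  s u < s w ∧ ∀ g ∈ upperEnvelope s τ, ¬(s u < s g ∧ s g < s w)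

def dangerLines (s τ : ι → ℝ) : Set ι :=
  {e ∈ upperEnvelope s τ | ∃ X Y, (∀ g ∈ upperEnvelope s τ, g ∈ linesAbove s τ X Y ↔ g = e) ∧
    ∃ w ∈ linesAbove s τ X Y, w ≠ e}

def envelopeRun (s τ : ι → ℝ) (i : ι) : Set ι :=
  {j | j ∈ upperEnvelope s τ ∧ s j ≤ s i ∧ ∀ d ∈ dangerLines s τ, s d < s j ∨ s i < s d}

open Classical in
/-- `true` is red; the parity of the run makes the envelope lines that are not danger lines
alternate in slope order. -/
noncomputable def envelopeColoring (s τ : ι → ℝ) (i : ι) : Bool :=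
  decide (i ∈ upperEnvelope s τ ∧ (i ∈ dangerLines s τ ∨ Even (envelopeRun s τ i).ncard))

section

variable {s τ : ι → ℝ} {X Y : ℝ}

lemma mem_linesAbove {i : ι} : i ∈ linesAbove s τ X Y ↔ Y ≤ τ i + s i * X := Iff.rfl

lemma exists_mem_upperEnvelope_forall_le [Finite ι] [Nonempty ι] (X : ℝ) :
    ∃ z ∈ upperEnvelope s τ, ∀ j, τ j + s j * X ≤ τ z + s z * X := by
  obtain ⟨z, hz⟩ := Finite.exists_max fun j => τ j + s j * X
  exact ⟨z, ⟨X, hz⟩, hz⟩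

lemma mem_linesAbove_of_mem_upperEnvelope {e g e' : ι} (hg : g ∈ upperEnvelope s τ)
    (h₁ : s e < s g) (h₂ : s g < s e') (he : e ∈ linesAbove s τ X Y)
    (he' : e' ∈ linesAbove s τ X Y) : g ∈ linesAbove s τ X Y := by
  obtain ⟨Xg, hXg⟩ := hg
  rw [mem_linesAbove] at *
  by_contra! h
  have := lt_of_crossing_lt_le h₁ (h.trans_le he) (hXg e)
  have := lt_of_crossing_le_lt h₂ (hXg e') (h.trans_le he')
  linarith

lemma exists_slopeCovBy_left [Finite ι] {a b : ι} (ha : a ∈ upperEnvelope s τ)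
    (hab : s a < s b) : ∃ g ∈ upperEnvelope s τ, s a ≤ s g ∧ SlopeCovBy s τ g b := by
  obtain ⟨g, ⟨hg, hgb⟩, hmax⟩ := Set.exists_max_image {g | g ∈ upperEnvelope s τ ∧ s g < s b} s
    (Set.toFinite _) ⟨a, ha, hab⟩
  exact ⟨g, hg, hmax a ⟨ha, hab⟩, hgb, fun g' hg' h => h.1.not_ge (hmax g' ⟨hg', h.2⟩)⟩

lemma exists_slopeCovBy_right [Finite ι] {a b : ι} (hb : b ∈ upperEnvelope s τ)
    (hab : s a < s b) : ∃ g ∈ upperEnvelope s τ, s g ≤ s b ∧ SlopeCovBy s τ a g := by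
  obtain ⟨g, ⟨hg, hag⟩, hmin⟩ := Set.exists_min_image {g | g ∈ upperEnvelope s τ ∧ s a < s g} s
    (Set.toFinite _) ⟨b, hb, hab⟩
  exact ⟨g, hg, hmin b ⟨hb, hab⟩, hag, fun g' hg' h => h.2.not_ge (hmin g' ⟨hg', h.1⟩)⟩

lemma exists_slopeCovBy_left_mem_linesAbove [Finite ι] (hs : Injective s) {a b : ι}
    (ha : a ∈ upperEnvelope s τ) (hab : s a < s b) (haT : a ∈ linesAbove s τ X Y)
    (hbT : b ∈ linesAbove s τ X Y) :
    ∃ g ∈ upperEnvelope s τ, g ∈ linesAbove s τ X Y ∧ SlopeCovBy s τ g b := by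
  obtain ⟨g, hg, hag, hgb⟩ := exists_slopeCovBy_left ha hab
  refine ⟨g, hg, ?_, hgb⟩
  rcases hag.lt_or_eq with h | h
  · exact mem_linesAbove_of_mem_upperEnvelope hg h hgb.1 haT hbT
  · rwa [← hs h]

lemma exists_slopeCovBy_right_mem_linesAbove [Finite ι] (hs : Injective s) {a b : ι}
    (hb : b ∈ upperEnvelope s τ) (hab : s a < s b) (haT : a ∈ linesAbove s τ X Y)
    (hbT : b ∈ linesAbove s τ X Y) :
    ∃ g ∈ upperEnvelope s τ, g ∈ linesAbove s τ X Y ∧ SlopeCovBy s τ a g := by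
  obtain ⟨g, hg, hgb, hag⟩ := exists_slopeCovBy_right hb hab
  refine ⟨g, hg, ?_, hag⟩
  rcases hgb.lt_or_eq with h | h
  · exact mem_linesAbove_of_mem_upperEnvelope hg hag.1 h haT hbT
  · rwa [hs h]

lemma exists_slopeCovBy_of_notMem_upperEnvelope [Finite ι] (hs : Injective s) {w : ι}
    (hw : w ∉ upperEnvelope s τ) (X : ℝ) :
    ∃ g ∈ upperEnvelope s τ, τ w + s w * X ≤ τ g + s g * X ∧
      (SlopeCovBy s τ g w ∨ SlopeCovBy s τ w g) := by
  have : Nonempty ι := ⟨w⟩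
  obtain ⟨z, hz, hzmax⟩ := exists_mem_upperEnvelope_forall_le (s := s) (τ := τ) X
  have hzw : s z ≠ s w := fun h => hw (hs h ▸ hz)
  rcases hzw.lt_or_gt with hlt | hlt
  · obtain ⟨g, hg, hzg, hgw⟩ := exists_slopeCovBy_left hz hlt
    refine ⟨g, hg, ?_, Or.inl hgw⟩
    rcases hzg.lt_or_eq with hzg | hzg
    · obtain ⟨Xg, hXg⟩ := hg
      by_contra! h
      have := lt_of_crossing_le_lt hgw.1 (hXg w) h
      have := lt_of_crossing_lt_le hzg (h.trans_le (hzmax w)) (hXg z)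
      linarith
    · rw [← hs hzg]; exact hzmax w
  · obtain ⟨g, hg, hgz, hwg⟩ := exists_slopeCovBy_right hz hlt
    refine ⟨g, hg, ?_, Or.inr hwg⟩
    rcases hgz.lt_or_eq with hgz | hgz
    · obtain ⟨Xg, hXg⟩ := hg
      by_contra! h
      have := lt_of_crossing_lt_le hwg.1 h (hXg w)
      have := lt_of_crossing_le_lt hgz (hXg z) (h.trans_le (hzmax w))
      linarith
    · rw [hs hgz]; exact hzmax w

lemma notMem_dangerLines [Finite ι] (hs : Injective s) {eL e eU : ι}
    (hT : linesAbove s τ X Y ⊆ upperEnvelope s τ) (hL : SlopeCovBy s τ eL e)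
    (hU : SlopeCovBy s τ e eU) (hLT : eL ∈ linesAbove s τ X Y) (hUT : eU ∈ linesAbove s τ X Y) :
    e ∉ dangerLines s τ := by
  rintro ⟨-, X₁, Y₁, honly, w, hw₁, hwe⟩
  have hwE : w ∉ upperEnvelope s τ := fun h => hwe ((honly w h).1 hw₁)
  obtain ⟨g, hg, hwg, hcov⟩ := exists_slopeCovBy_of_notMem_upperEnvelope hs hwE X₁
  obtain rfl : g = e := (honly g hg).1 (le_trans hw₁ hwg)
  have hne : ∀ i ∈ upperEnvelope s τ, s i ≠ s w := fun i hi h => hwE (hs h ▸ hi)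
  have hslopes : s eL < s w ∧ s w < s eU := by
    rcases hcov with h | h
    · refine ⟨hL.1.trans h.1, lt_of_not_ge fun h' => h.2 eU (hT hUT) ⟨hU.1, ?_⟩⟩
      exact h'.lt_of_ne (hne eU (hT hUT))
    · refine ⟨lt_of_not_ge fun h' => h.2 eL (hT hLT) ⟨?_, hL.1⟩, h.1.trans hU.1⟩
      exact h'.lt_of_ne (hne eL (hT hLT)).symm
  have hL₁ : eL ∉ linesAbove s τ X₁ Y₁ := fun h => hL.1.ne ((honly eL (hT hLT)).1 h ▸ rfl)
  have hU₁ : eU ∉ linesAbove s τ X₁ Y₁ := fun h => hU.1.ne' ((honly eU (hT hUT)).1 h ▸ rfl)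
  have hw : w ∉ linesAbove s τ X Y := fun h => hwE (hT h)
  simp only [mem_linesAbove, not_le] at *
  have := lt_of_crossing_le_lt (tu := τ eL) (tw := τ w) (X₁ := X) (X₂ := X₁) hslopes.1
    (by linarith) (by linarith)
  have := lt_of_crossing_le_lt (tu := τ w) (tw := τ eU) (X₁ := X₁) (X₂ := X) hslopes.2
    (by linarith) (by linarith)
  linarith

lemma mem_envelopeRun_self (hs : Injective s) {e : ι} (he : e ∈ upperEnvelope s τ)
    (heD : e ∉ dangerLines s τ) : e ∈ envelopeRun s τ e :=
  ⟨he, le_rfl, fun d hd => (hs.ne (by rintro rfl; exact heD hd)).lt_or_gt⟩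

lemma envelopeRun_eq_insert (hs : Injective s) {u w : ι} (huw : SlopeCovBy s τ u w)
    (hw : w ∈ upperEnvelope s τ) (hwD : w ∉ dangerLines s τ) :
    envelopeRun s τ w = insert w (envelopeRun s τ u) := by
  ext j
  constructor
  · rintro ⟨hj, hjw, hjD⟩
    rcases eq_or_ne j w with rfl | hne
    · exact Set.mem_insert _ _
    have hjw : s j < s w := hjw.lt_of_ne (hs.ne hne)
    have hju : s j ≤ s u := not_lt.1 fun h => huw.2 j hj ⟨h, hjw⟩
    refine Or.inr ⟨hj, hju, fun d hd => (hjD d hd).imp_right huw.1.trans⟩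
  · rintro (rfl | ⟨hj, hju, hjD⟩)
    · exact mem_envelopeRun_self hs hw hwD
    refine ⟨hj, hju.trans huw.1.le, fun d hd => (hjD d hd).imp_right fun hud => ?_⟩
    have hwd : s w ≤ s d := not_lt.1 fun h => huw.2 d hd.1 ⟨hud, h⟩
    exact hwd.lt_of_ne (hs.ne fun h => hwD (h ▸ hd))

lemma envelopeColoring_ne [Finite ι] (hs : Injective s) {u w : ι} (huw : SlopeCovBy s τ u w)
    (hu : u ∈ upperEnvelope s τ) (huD : u ∉ dangerLines s τ)
    (hw : w ∈ upperEnvelope s τ) (hwD : w ∉ dangerLines s τ) :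
    envelopeColoring s τ u ≠ envelopeColoring s τ w := by
  have hwu : w ∉ envelopeRun s τ u := fun h => (h.2.1.trans_lt huw.1).false
  simp [envelopeColoring, hu, huD, hw, hwD, envelopeRun_eq_insert hs huw hw hwD,
    Set.ncard_insert_of_notMem hwu, Nat.even_add_one, -Nat.not_even_iff_odd]

lemma envelopeColoring_eq_true_or [Finite ι] (hs : Injective s) {u w : ι}
    (huw : SlopeCovBy s τ u w) (hu : u ∈ upperEnvelope s τ) (hw : w ∈ upperEnvelope s τ) :
    envelopeColoring s τ u = true ∨ envelopeColoring s τ w = true := by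
  by_cases huD : u ∈ dangerLines s τ
  · simp [envelopeColoring, hu, huD]
  by_cases hwD : w ∈ dangerLines s τ
  · simp [envelopeColoring, hw, hwD]
  have := envelopeColoring_ne hs huw hu huD hw hwD
  revert this
  cases envelopeColoring s τ u <;> cases envelopeColoring s τ w <;> simp

lemma exists_envelopeColoring_eq_true [Finite ι] (hs : Injective s)
    (h₂ : 2 ≤ (linesAbove s τ X Y).ncard) :
    ∃ i ∈ linesAbove s τ X Y, envelopeColoring s τ i = true := by
  obtain ⟨a, b, ha, hb, hab⟩ := (Set.one_lt_ncard_iff).1 h₂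
  have : Nonempty ι := ⟨a⟩
  obtain ⟨z, hz, hzmax⟩ := exists_mem_upperEnvelope_forall_le (s := s) (τ := τ) X
  have hzT : z ∈ linesAbove s τ X Y := le_trans ha (hzmax a)
  by_cases hone : ∀ g ∈ upperEnvelope s τ, g ∈ linesAbove s τ X Y → g = z
  · have hw : ∃ w ∈ linesAbove s τ X Y, w ≠ z := by
      rcases eq_or_ne a z with rfl | h
      exacts [⟨b, hb, hab.symm⟩, ⟨a, ha, h⟩]
    have hzD : z ∈ dangerLines s τ :=
      ⟨hz, X, Y, fun g hg => ⟨hone g hg, fun h => h ▸ hzT⟩, hw⟩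
    exact ⟨z, hzT, by simp [envelopeColoring, hz, hzD]⟩
  push Not at hone
  obtain ⟨g, hg, hgT, hgz⟩ := hone
  obtain ⟨u, hu, huT, w, hw, hwT, huw⟩ : ∃ u ∈ upperEnvelope s τ, u ∈ linesAbove s τ X Y ∧
      ∃ w ∈ upperEnvelope s τ, w ∈ linesAbove s τ X Y ∧ SlopeCovBy s τ u w := by
    rcases (hs.ne hgz).lt_or_gt with h | h
    · obtain ⟨u, hu, huT, huz⟩ := exists_slopeCovBy_left_mem_linesAbove hs hg h hgT hzT
      exact ⟨u, hu, huT, z, hz, hzT, huz⟩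
    · obtain ⟨u, hu, huT, hug⟩ := exists_slopeCovBy_left_mem_linesAbove hs hz h hzT hgT
      exact ⟨u, hu, huT, g, hg, hgT, hug⟩
  rcases envelopeColoring_eq_true_or hs huw hu hw with h | h
  exacts [⟨u, huT, h⟩, ⟨w, hwT, h⟩]

lemma exists_envelopeColoring_eq_false [Finite ι] (hs : Injective s)
    (h₃ : 3 ≤ (linesAbove s τ X Y).ncard) :
    ∃ i ∈ linesAbove s τ X Y, envelopeColoring s τ i = false := by
  by_contra! hred
  simp only [ne_eq, Bool.not_eq_false] at hred
  have hT : linesAbove s τ X Y ⊆ upperEnvelope s τ := fun i hi => by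
    by_contra h
    simpa [envelopeColoring, h] using hred i hi
  obtain ⟨a, ha, e, he, c, hc, hae, hec⟩ := exists_lt_lt_of_two_lt_ncard hs h₃
  obtain ⟨eL, heL, heLT, hL⟩ := exists_slopeCovBy_left_mem_linesAbove hs (hT ha) hae ha he
  obtain ⟨eU, -, heUT, hU⟩ := exists_slopeCovBy_right_mem_linesAbove hs (hT hc) hec he hc
  have heD := notMem_dangerLines hs hT hL hU heLT heUT
  have heven : Even (envelopeRun s τ e).ncard := by
    simpa [envelopeColoring, hT he, heD] using hred e he
  obtain ⟨j, ⟨hj, hje, hjD⟩, hne⟩ := Set.exists_ne_of_one_lt_ncard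
    (Set.one_lt_ncard_of_nonempty_of_even (Set.toFinite _)
      ⟨e, mem_envelopeRun_self hs (hT he) heD⟩ heven) e
  have hjeL : s j ≤ s eL := not_lt.1 fun h => hL.2 j hj ⟨h, hje.lt_of_ne (hs.ne hne)⟩
  have heLD : eL ∉ dangerLines s τ := fun hd =>
    (hjD eL hd).elim (fun h => (h.trans_le hjeL).false) fun h => (h.trans hL.1).false
  exact envelopeColoring_ne hs hL heL heLD (hT he) heD (by rw [hred eL heLT, hred e he])

theorem isAboveColoring_envelopeColoring [Finite ι] (hs : Injective s) :
    IsAboveColoring s τ (envelopeColoring s τ) :=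
  fun _ _ => ⟨exists_envelopeColoring_eq_true hs, exists_envelopeColoring_eq_false hs⟩

end

theorem exists_isAboveColoring [Finite ι] (s τ : ι → ℝ) : ∃ χ, IsAboveColoring s τ χ := by
  classical
  choose top htop hmax using fun σ : Set.range s =>
    Set.exists_max_image {i | s i = σ} τ (Set.toFinite _) σ.2
  obtain ⟨χ₀, hχ₀⟩ : ∃ χ₀, IsAboveColoring (fun σ : Set.range s => (σ : ℝ)) (τ ∘ top) χ₀ :=
    ⟨_, isAboveColoring_envelopeColoring Subtype.val_injective⟩
  let cls := Set.rangeFactorization s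
  have hcls_top (σ : Set.range s) : cls (top σ) = σ := Subtype.ext (htop σ)
  let χ (i : ι) : Bool := xor (χ₀ (cls i)) (decide (top (cls i) ≠ i))
  refine ⟨χ, fun X Y => ?_⟩
  set T := linesAbove s τ X Y
  set T₀ := linesAbove (fun σ : Set.range s => (σ : ℝ)) (τ ∘ top) X Y
  have hcls_mem {i : ι} (hi : i ∈ T) : cls i ∈ T₀ :=
    hi.trans (add_le_add_left (hmax (cls i) i rfl) _)
  have htop_mem {σ : Set.range s} (hσ : σ ∈ T₀) : top σ ∈ T ∧ χ (top σ) = χ₀ σ := by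
    refine ⟨?_, by simp [χ, hcls_top]⟩
    change Y ≤ τ (top σ) + σ * X at hσ
    rwa [← htop σ] at hσ
  by_cases hinj : Set.InjOn s T
  · have hcard : T.ncard ≤ T₀.ncard := by
      have hcls_inj : Set.InjOn cls T := fun i hi j hj h => hinj hi hj (congrArg Subtype.val h)
      rw [← hcls_inj.ncard_image]
      exact Set.ncard_le_ncard (Set.image_subset_iff.2 fun i hi => hcls_mem hi)
    refine ⟨fun h₂ => ?_, fun h₃ => ?_⟩
    · obtain ⟨σ, hσ, hred⟩ := (hχ₀ X Y).1 (h₂.trans hcard)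
      exact ⟨top σ, (htop_mem hσ).1, (htop_mem hσ).2.trans hred⟩
    · obtain ⟨σ, hσ, hblue⟩ := (hχ₀ X Y).2 (h₃.trans hcard)
      exact ⟨top σ, (htop_mem hσ).1, (htop_mem hσ).2.trans hblue⟩
  obtain ⟨i, hi, j, hj, hij, hne⟩ : ∃ i ∈ T, ∃ j ∈ T, s i = s j ∧ i ≠ j := by
    simpa [Set.InjOn] using hinj
  obtain ⟨hmT, hχm⟩ := htop_mem (hcls_mem hi)
  obtain ⟨k, hkT, hks, hkm⟩ : ∃ k ∈ T, s k = s i ∧ k ≠ top (cls i) := by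
    rcases eq_or_ne i (top (cls i)) with h | h
    exacts [⟨j, hj, hij.symm, fun h' => hne (h.trans h'.symm)⟩, ⟨i, hi, rfl, h⟩]
  have hχk : χ k = !χ₀ (cls i) := by
    have : cls k = cls i := Subtype.ext hks
    simp [χ, this, hkm.symm]
  have hboth (b : Bool) : ∃ k ∈ T, χ k = b := by
    by_cases hb : χ₀ (cls i) = b
    · exact ⟨_, hmT, hχm.trans hb⟩
    · exact ⟨k, hkT, by rw [hχk]; cases b <;> simp_all⟩
  exact ⟨fun _ => hboth true, fun _ => hboth false⟩

theorem exists_coloring_of_four_le [Finite ι] (σ : ι → Prop) [DecidablePred σ] (s τ : ι → ℝ) :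
    ∃ χ : ι → Bool, ∀ X Y, 4 ≤ {i | (if σ i then Y else -Y) ≤ τ i + s i * X}.ncard →
      ∃ i j, (if σ i then Y else -Y) ≤ τ i + s i * X ∧
        (if σ j then Y else -Y) ≤ τ j + s j * X ∧ χ i ≠ χ j := by
  obtain ⟨χL, hL⟩ := exists_isAboveColoring (fun i : {i // σ i} => s i) (fun i => τ i)
  obtain ⟨χU, hU⟩ := exists_isAboveColoring (fun i : {i // ¬σ i} => s i) (fun i => τ i)
  let χ (i : ι) : Bool := if h : σ i then χL ⟨i, h⟩ else !χU ⟨i, h⟩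
  refine ⟨χ, fun X Y h₄ => ?_⟩
  set S := {i | (if σ i then Y else -Y) ≤ τ i + s i * X}
  set A := linesAbove (fun i : {i // σ i} => s i) (fun i => τ i) X Y
  set B := linesAbove (fun i : {i // ¬σ i} => s i) (fun i => τ i) X (-Y)
  have hA {x : {i // σ i}} (hx : x ∈ A) : x.1 ∈ S ∧ χ x = χL x := by
    simpa [S, χ, x.2, A, mem_linesAbove] using hx
  have hB {x : {i // ¬σ i}} (hx : x ∈ B) : x.1 ∈ S ∧ χ x = !χU x := by
    simpa [S, χ, x.2, B, mem_linesAbove] using hx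
  have hAB : 4 ≤ A.ncard + B.ncard := by
    have hS : S = Subtype.val '' A ∪ Subtype.val '' B := by
      ext i; by_cases h : σ i <;> simp [S, A, B, h, mem_linesAbove]
    calc 4 ≤ S.ncard := h₄
      _ ≤ (Subtype.val '' A).ncard + (Subtype.val '' B).ncard := hS ▸ Set.ncard_union_le _ _
      _ = A.ncard + B.ncard := by
        rw [Set.ncard_image_of_injective A Subtype.val_injective,
          Set.ncard_image_of_injective B Subtype.val_injective]
  suffices ∃ i ∈ S, χ i = true ∧ ∃ j ∈ S, χ j = false by
    obtain ⟨i, hi, hχi, j, hj, hχj⟩ := this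
    exact ⟨i, j, hi, hj, by simp [hχi, hχj]⟩
  by_cases hA₃ : 3 ≤ A.ncard
  · obtain ⟨x, hx, hred⟩ := (hL X Y).1 (show 2 ≤ A.ncard by omega)
    obtain ⟨y, hy, hblue⟩ := (hL X Y).2 hA₃
    exact ⟨x, (hA hx).1, (hA hx).2.trans hred, y, (hA hy).1, (hA hy).2.trans hblue⟩
  by_cases hB₃ : 3 ≤ B.ncard
  · obtain ⟨x, hx, hred⟩ := (hU X (-Y)).1 (show 2 ≤ B.ncard by omega)
    obtain ⟨y, hy, hblue⟩ := (hU X (-Y)).2 hB₃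
    exact ⟨y, (hB hy).1, by simp [(hB hy).2, hblue], x, (hB hx).1, by simp [(hB hx).2, hred]⟩
  obtain ⟨x, hx, hred⟩ := (hL X Y).1 (show 2 ≤ A.ncard by omega)
  obtain ⟨y, hy, hred'⟩ := (hU X (-Y)).1 (show 2 ≤ B.ncard by omega)
  exact ⟨x, (hA hx).1, (hA hx).2.trans hred, y, (hB hy).1, by simp [(hB hy).2, hred']⟩

end LineColoring

lemma exists_forall_mul_add_ne_zero {ι : Type*} [Finite ι] {a b : ι → ℝ}
    (h : ∀ i, (a i, b i) ≠ (0, 0)) : ∃ t : ℝ, ∀ i, a i * t + b i ≠ 0 := by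
  obtain ⟨t, ht⟩ := (Set.finite_range fun i => -b i / a i).infinite_compl.nonempty
  refine ⟨t, fun i hi => ?_⟩
  rcases eq_or_ne (a i) 0 with ha | ha
  · exact h i (by simp_all)
  · exact ht ⟨i, by field_simp; linarith⟩

lemma mem_halfPlane_iff_s13 {a b c t : ℝ} (h : a * t + b ≠ 0) (p : ℝ × ℝ) :
    p ∈ halfPlane a b c ↔ (if 0 < a * t + b then p.2 else -p.2) ≤
      c / |a * t + b| + -a / |a * t + b| * (p.1 - t * p.2) := by
  have hpos : 0 < |a * t + b| := abs_pos.2 h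
  have hlhs : (if 0 < a * t + b then p.2 else -p.2) * |a * t + b| = (a * t + b) * p.2 := by
    split_ifs with h'
    · rw [abs_of_pos h']; ring
    · rw [abs_of_nonpos (not_lt.1 h')]; ring
  have hrhs : (c / |a * t + b| + -a / |a * t + b| * (p.1 - t * p.2)) * |a * t + b| =
      c - a * (p.1 - t * p.2) := by
    field_simp
    ring
  change _ ≤ c ↔ _
  conv_rhs => rw [← mul_le_mul_iff_of_pos_right hpos, hlhs, hrhs]
  constructor <;> intro <;> linarith

theorem stmt13 (n : ℕ) (H : Fin n → ℝ × ℝ × ℝ)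
    (hH : ∀ i, ((H i).1, (H i).2.1) ≠ ((0 : ℝ), (0 : ℝ))) :
    ∃ f : Fin n → Fin 2, ∀ p : ℝ × ℝ,
      4 ≤ {i : Fin n | p ∈ halfPlane (H i).1 (H i).2.1 (H i).2.2}.ncard →
      ∃ i j : Fin n, p ∈ halfPlane (H i).1 (H i).2.1 (H i).2.2 ∧
        p ∈ halfPlane (H j).1 (H j).2.1 (H j).2.2 ∧ f i ≠ f j := by
  obtain ⟨t, ht⟩ := exists_forall_mul_add_ne_zero hH
  obtain ⟨χ, hχ⟩ := LineColoring.exists_coloring_of_four_le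
    (fun i => 0 < (H i).1 * t + (H i).2.1) (fun i => -(H i).1 / |(H i).1 * t + (H i).2.1|)
    (fun i => (H i).2.2 / |(H i).1 * t + (H i).2.1|)
  refine ⟨fun i => bif χ i then 0 else 1, fun p hp => ?_⟩
  simp only [mem_halfPlane_iff_s13 (ht _)] at hp ⊢
  obtain ⟨i, j, hi, hj, hij⟩ := hχ (p.1 - t * p.2) p.2 hp
  exact ⟨i, j, hi, hj, by revert hij; cases χ i <;> cases χ j <;> simp⟩
end
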